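/- arXiv:1809.08859 — 6 statements merged into one kernel-verified Lean document; each statement's English description precedes it below -/
import Mathlib

section
/- Let V be a finite-dimensional complex inner product space, R a Kähler curvature tensor on V, and W ⊆ V a complex linear subspace. Suppose v ∈ W is a unit vector that minimizes the holomorphic sectional curvature on W, i.e. R(v,v,v,v) ≤ R(x,x,x,x) for every unit vector x ∈ W. Then for every unit vector x ∈ W one has the inequality of real numbers 2·R(v,v,x,x) ≥ (1 + |⟨v,x⟩|²)·R(v,v,v,v). -/
lemma aux_nonneg' {x K : ℝ} (hK : 1 ≤ K) (h : ∀ t : ℝ, 0 < t → t ≤ 1 → -(K * t) ≤ x) : 0 ≤ x := by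
  by_contra hx
  push_neg at hx
  have hm0 : 0 < min 1 (-x / (2 * K)) :=
    lt_min one_pos (div_pos (by linarith) (by linarith))
  have ht := h _ hm0 (min_le_left _ _)
  have h2 : min 1 (-x / (2 * K)) ≤ -x / (2 * K) := min_le_right _ _
  have hKx : K * (-x / (2 * K)) = -x / 2 := by
    field_simp
  nlinarith [mul_le_mul_of_nonneg_left h2 (by linarith : (0:ℝ) ≤ K)]

lemma step1 {a b c d : ℝ}
    (h : ∀ t : ℝ, 0 < t → t ≤ 1 → 0 ≤ a * t + b * t ^ 2 + c * t ^ 3 + d * t ^ 4) : 0 ≤ a := by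
  refine aux_nonneg' (K := |b| + |c| + |d| + 1)
    (le_add_of_nonneg_left (by positivity)) fun t ht0 ht1 => ?_
  by_contra h'
  push_neg at h'
  have hb : b * t ^ 2 ≤ |b| * t ^ 2 := by
    nlinarith [mul_nonneg (by linarith [le_abs_self b] : (0:ℝ) ≤ |b| - b) (sq_nonneg t)]
  have hc3 : c * t ^ 3 ≤ |c| * t ^ 2 := by
    nlinarith [mul_nonneg (mul_nonneg (abs_nonneg c) (sq_nonneg t)) (by linarith : (0:ℝ) ≤ 1 - t),
      mul_nonneg (by linarith [le_abs_self c] : (0:ℝ) ≤ |c| - c) (pow_pos ht0 3).le]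
  have hd : d * t ^ 4 ≤ |d| * t ^ 2 := by
    nlinarith [mul_nonneg (mul_nonneg (abs_nonneg d) (sq_nonneg t)) (by nlinarith : (0:ℝ) ≤ 1 - t ^ 2),
      mul_nonneg (by linarith [le_abs_self d] : (0:ℝ) ≤ |d| - d) (pow_pos ht0 4).le]
  have key := mul_lt_mul_of_pos_right h' ht0
  rw [show -((|b| + |c| + |d| + 1) * t) * t = -(|b| * t ^ 2 + |c| * t ^ 2 + |d| * t ^ 2 + t ^ 2) from by ring] at key
  linarith [h t ht0 ht1, sq_nonneg t]

lemma quartic_b_nonneg {a b c d : ℝ}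
    (h : ∀ t : ℝ, 0 ≤ a * t + b * t ^ 2 + c * t ^ 3 + d * t ^ 4) : 0 ≤ b := by
  have ha1 : 0 ≤ a := step1 fun t _ _ => h t
  have ha2 : 0 ≤ -a := by
    refine step1 (b := b) (c := -c) (d := d) fun t _ _ => ?_
    have := h (-t); ring_nf at this ⊢; linarith
  have ha : a = 0 := by linarith
  subst ha
  refine aux_nonneg' (K := |c| + |d| + 1)
    (le_add_of_nonneg_left (by positivity)) fun t ht0 ht1 => ?_
  by_contra h'
  push_neg at h'
  have hc3 : c * t ^ 3 ≤ |c| * t ^ 3 := by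
    nlinarith [mul_nonneg (by linarith [le_abs_self c] : (0:ℝ) ≤ |c| - c) (pow_pos ht0 3).le]
  have hd : d * t ^ 4 ≤ |d| * t ^ 3 := by
    nlinarith [mul_nonneg (mul_nonneg (abs_nonneg d) (pow_pos ht0 3).le) (by linarith : (0:ℝ) ≤ 1 - t),
      mul_nonneg (by linarith [le_abs_self d] : (0:ℝ) ≤ |d| - d) (pow_pos ht0 4).le]
  have key := mul_lt_mul_of_pos_right (mul_lt_mul_of_pos_right h' ht0) ht0
  rw [show -((|c| + |d| + 1) * t) * t * t = -(|c| * t ^ 3 + |d| * t ^ 3 + t ^ 3) from by ring,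
    show b * t * t = b * t ^ 2 from by ring] at key
  linarith [h t, pow_pos ht0 3]


/-- A Kähler curvature tensor on a complex inner product space `V`:
`ℂ`-linear in the 1st and 3rd arguments, conjugate-linear in the 2nd and 4th,
with the symmetries of the curvature tensor of a Kähler metric at a point. -/
structure KahlerCurvatureTensor (V : Type*) [NormedAddCommGroup V]
    [InnerProductSpace ℂ V] where
  R : V → V → V → V → ℂ
  map_add₁ : ∀ x x' y z w, R (x + x') y z w = R x y z w + R x' y z w
  map_smul₁ : ∀ (c : ℂ) (x y z w : V), R (c • x) y z w = c * R x y z w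
  map_add₂ : ∀ x y y' z w, R x (y + y') z w = R x y z w + R x y' z w
  map_smul₂ : ∀ (c : ℂ) (x y z w : V), R x (c • y) z w = (starRingEnd ℂ) c * R x y z w
  map_add₃ : ∀ x y z z' w, R x y (z + z') w = R x y z w + R x y z' w
  map_smul₃ : ∀ (c : ℂ) (x y z w : V), R x y (c • z) w = c * R x y z w
  map_add₄ : ∀ x y z w w', R x y z (w + w') = R x y z w + R x y z w'
  map_smul₄ : ∀ (c : ℂ) (x y z w : V), R x y z (c • w) = (starRingEnd ℂ) c * R x y z w
  symm_pair : ∀ x y z w, R x y z w = R z w x y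
  symm_exch : ∀ x y z w, R x y z w = R z y x w
  symm_conj : ∀ x y z w, (starRingEnd ℂ) (R x y z w) = R y x w z

/-- Lemma 2.4 (first part): a unit minimizer `v` of the holomorphic sectional
curvature on a subspace `W` satisfies
`2 R(v,v̄,x,x̄) ≥ (1 + |⟨v,x⟩|²) R(v,v̄,v,v̄)` for every unit vector `x ∈ W`. -/
theorem min_hsc_bisectional_ineq
    {V : Type*} [NormedAddCommGroup V] [InnerProductSpace ℂ V]
    [FiniteDimensional ℂ V]
    (T : KahlerCurvatureTensor V) (W : Submodule ℂ V)
    (v : V) (hvW : v ∈ W) (hv : ‖v‖ = 1)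
    (hmin : ∀ x ∈ W, ‖x‖ = 1 → (T.R v v v v).re ≤ (T.R x x x x).re) :
    ∀ x ∈ W, ‖x‖ = 1 →
      2 * (T.R v v x x).re ≥
        (1 + ‖(inner ℂ v x : ℂ)‖ ^ 2) * (T.R v v v v).re := by
  intro x hxW hx
  set A : ℝ := (T.R v v v v).re with hA
  set s : ℂ := (inner ℂ v x : ℂ) with hs
  -- scaled minimality
  have hmin' : ∀ w ∈ W, A * (‖w‖ ^ 2) ^ 2 ≤ (T.R w w w w).re := by
    intro w hw
    rcases eq_or_ne w 0 with rfl | hw0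
    · have h0 : T.R 0 0 0 0 = 0 := by
        have := T.map_smul₁ 0 0 0 0 0
        simpa using this
      simp [h0]
    · have hnw : (0:ℝ) < ‖w‖ := norm_pos_iff.2 hw0
      set r : ℂ := ((‖w‖⁻¹ : ℝ) : ℂ) with hr
      have hu : ‖r • w‖ = 1 := by
        rw [norm_smul, hr, Complex.norm_real, Real.norm_eq_abs,
          abs_of_pos (inv_pos.2 hnw)]
        field_simp
      have huW : r • w ∈ W := Submodule.smul_mem W r hw
      have hRu : T.R (r • w) (r • w) (r • w) (r • w)
          = ((‖w‖⁻¹ ^ 4 : ℝ) : ℂ) * T.R w w w w := by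
        rw [T.map_smul₁, T.map_smul₂, T.map_smul₃, T.map_smul₄, hr, Complex.conj_ofReal]
        push_cast
        ring
      have := hmin (r • w) huW hu
      rw [hRu] at this
      rw [Complex.re_ofReal_mul] at this
      have h4 : ‖w‖⁻¹ ^ 4 * (‖w‖ ^ 2) ^ 2 = 1 := by
        field_simp
      calc A * (‖w‖ ^ 2) ^ 2 ≤ (‖w‖⁻¹ ^ 4 * (T.R w w w w).re) * (‖w‖ ^ 2) ^ 2 :=
            mul_le_mul_of_nonneg_right this (by positivity)
        _ = (T.R w w w w).re * (‖w‖⁻¹ ^ 4 * (‖w‖ ^ 2) ^ 2) := by ring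
        _ = (T.R w w w w).re := by rw [h4, mul_one]
  -- key second-order inequality for each unit complex direction c
  have key : ∀ c : ℂ, (starRingEnd ℂ) c * c = 1 →
      0 ≤ ((starRingEnd ℂ) c * c * (T.R x x v v + T.R x v v x + T.R v x x v + T.R v v x x)
            + c ^ 2 * T.R x v x v + ((starRingEnd ℂ) c) ^ 2 * T.R v x v x).re
          - A * (2 + 4 * ((c * s).re) ^ 2) := by
    intro c hc
    refine quartic_b_nonneg
      (a := (c * T.R x v v v + (starRingEnd ℂ) c * T.R v x v v
          + c * T.R v v x v + (starRingEnd ℂ) c * T.R v v v x).re - A * (4 * (c * s).re))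
      (c := (c ^ 2 * (starRingEnd ℂ) c * (T.R x x x v + T.R x v x x)
          + c * ((starRingEnd ℂ) c) ^ 2 * (T.R x x v x + T.R v x x x)).re - A * (4 * (c * s).re))
      (d := (c ^ 2 * ((starRingEnd ℂ) c) ^ 2 * T.R x x x x).re - A)
      (fun t => ?_)
    set u : ℂ := (t : ℂ) * c with hu
    set w : V := v + u • x with hwdef
    have hwW : w ∈ W := Submodule.add_mem W hvW (Submodule.smul_mem W u hxW)
    -- expansion of the curvature
    have hexp : T.R w w w w = T.R v v v v
        + (t:ℂ) * (c * T.R x v v v + (starRingEnd ℂ) c * T.R v x v v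
            + c * T.R v v x v + (starRingEnd ℂ) c * T.R v v v x)
        + (t:ℂ)^2 * ((starRingEnd ℂ) c * c * (T.R x x v v + T.R x v v x + T.R v x x v + T.R v v x x)
            + c ^ 2 * T.R x v x v + ((starRingEnd ℂ) c) ^ 2 * T.R v x v x)
        + (t:ℂ)^3 * (c ^ 2 * (starRingEnd ℂ) c * (T.R x x x v + T.R x v x x)
            + c * ((starRingEnd ℂ) c) ^ 2 * (T.R x x v x + T.R v x x x))
        + (t:ℂ)^4 * (c ^ 2 * ((starRingEnd ℂ) c) ^ 2 * T.R x x x x) := by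
      simp only [hwdef, hu, T.map_add₁, T.map_add₂, T.map_add₃, T.map_add₄,
        T.map_smul₁, T.map_smul₂, T.map_smul₃, T.map_smul₄, map_mul, Complex.conj_ofReal]
      ring
    -- norm of w
    have hinner : (inner ℂ w w : ℂ) = ((1 + 2 * t * (c * s).re + t ^ 2 : ℝ) : ℂ) := by
      rw [hwdef, inner_add_add_self, inner_smul_left, inner_smul_right, inner_smul_left,
        inner_smul_right]
      rw [inner_self_eq_norm_sq_to_K v, inner_self_eq_norm_sq_to_K x, hv, hx,
        show (inner ℂ x v : ℂ) = (starRingEnd ℂ) s from (inner_conj_symm x v).symm]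
      rw [hu, map_mul, Complex.conj_ofReal,
        show (inner ℂ v x : ℂ) = s from hs.symm]
      have h2 : c * s + (starRingEnd ℂ) c * (starRingEnd ℂ) s = 2 * (((c * s).re : ℝ) : ℂ) := by
        rw [← map_mul, Complex.add_conj]; push_cast; ring
      push_cast
      linear_combination (t : ℂ) * h2 + (t : ℂ) ^ 2 * hc
    have hnormw : ‖w‖ ^ 2 = 1 + 2 * t * (c * s).re + t ^ 2 := by
      have h3 := inner_self_eq_norm_sq_to_K (𝕜 := ℂ) w
      rw [hinner] at h3
      have h4 : ((1 + 2 * t * (c * s).re + t ^ 2 : ℝ) : ℂ) = ((‖w‖ ^ 2 : ℝ) : ℂ) := by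
        rw [h3]; norm_cast
      exact (Complex.ofReal_inj.mp h4).symm
    -- the real polynomial inequality
    have hmw := hmin' w hwW
    rw [hnormw] at hmw
    have hre : (T.R w w w w).re = A
        + t * (c * T.R x v v v + (starRingEnd ℂ) c * T.R v x v v
            + c * T.R v v x v + (starRingEnd ℂ) c * T.R v v v x).re
        + t^2 * ((starRingEnd ℂ) c * c * (T.R x x v v + T.R x v v x + T.R v x x v + T.R v v x x)
            + c ^ 2 * T.R x v x v + ((starRingEnd ℂ) c) ^ 2 * T.R v x v x).re
        + t^3 * (c ^ 2 * (starRingEnd ℂ) c * (T.R x x x v + T.R x v x x)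
            + c * ((starRingEnd ℂ) c) ^ 2 * (T.R x x v x + T.R v x x x)).re
        + t^4 * (c ^ 2 * ((starRingEnd ℂ) c) ^ 2 * T.R x x x x).re := by
      rw [hexp]
      simp only [Complex.add_re, ← Complex.ofReal_pow, Complex.re_ofReal_mul]
      rfl
    rw [hre] at hmw
    nlinarith [hmw]
  have k1 := key 1 (by simp)
  have k2 := key Complex.I (by simp [Complex.conj_I, Complex.I_mul_I])
  -- symmetries
  have e1 : T.R x x v v = T.R v v x x := T.symm_pair x x v v
  have e2 : T.R x v v x = T.R v v x x := T.symm_exch x v v x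
  have e3 : T.R v x x v = T.R v v x x := by
    rw [T.symm_exch v x x v, e1]
  have hIs : (Complex.I * s).re = -s.im := by simp
  have habs : ‖s‖ ^ 2 = s.re * s.re + s.im * s.im := by
    rw [Complex.sq_norm, Complex.normSq_apply]
  simp only [map_one, one_mul, one_pow, mul_one] at k1
  simp only [Complex.conj_I, neg_mul, Complex.I_mul_I, neg_neg, one_mul,
    Complex.I_sq, neg_sq, neg_one_mul] at k2
  rw [hIs] at k2
  rw [e1, e2, e3] at k1 k2
  simp only [Complex.add_re, Complex.neg_re] at k1 k2
  rw [habs]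
  nlinarith [k1, k2]
end

section
/- Let V be a finite-dimensional complex inner product space, R a Kähler curvature tensor on V with semi-positive holomorphic sectional curvature, and W ⊆ V a complex linear subspace. If v ∈ W is a unit vector that minimizes the holomorphic sectional curvature on W (i.e. R(v,v,v,v) ≤ R(x,x,x,x) for every unit vector x ∈ W), then R(v,v,x,x) ≥ 0 for every vector x ∈ W. -/
lemma core_min_hsc
    {V : Type*} [NormedAddCommGroup V] [InnerProductSpace ℂ V]
    (T : KahlerCurvatureTensor V)
    (hsp : ∀ u : V, 0 ≤ (T.R u u u u).re)
    (W : Submodule ℂ V)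
    (v : V) (hvW : v ∈ W) (hv : ‖v‖ = 1)
    (hmin : ∀ x ∈ W, ‖x‖ = 1 → (T.R v v v v).re ≤ (T.R x x x x).re)
    (x : V) (hxW : x ∈ W) (hx : ‖x‖ = 1) :
    0 ≤ 4 * (T.R v v x x).re + 2 * (T.R x v x v).re := by
  set k := (T.R v v v v).re with hkdef
  have hk0 : 0 ≤ k := hsp v
  set α := ((inner ℂ v x : ℂ)).re with hαdef
  set A1 := (T.R x v v v + T.R v x v v + T.R v v x v + T.R v v v x).re with hA1
  set A2 := (T.R x x v v + T.R x v x v + T.R x v v x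
      + T.R v x x v + T.R v x v x + T.R v v x x).re with hA2
  set A3 := (T.R x x x v + T.R x x v x + T.R x v x x + T.R v x x x).re with hA3
  set A4 := (T.R x x x x).re with hA4
  -- polynomial expansion of the curvature along v + t x
  have expand : ∀ t : ℝ,
      (T.R (v + (t:ℂ)•x) (v + (t:ℂ)•x) (v + (t:ℂ)•x) (v + (t:ℂ)•x)).re
        = k + A1*t + A2*t^2 + A3*t^3 + A4*t^4 := by
    intro t
    have hC : T.R (v + (t:ℂ)•x) (v + (t:ℂ)•x) (v + (t:ℂ)•x) (v + (t:ℂ)•x)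
        = T.R v v v v
          + (t:ℂ) * (T.R x v v v + T.R v x v v + T.R v v x v + T.R v v v x)
          + ((t^2:ℝ):ℂ) * (T.R x x v v + T.R x v x v + T.R x v v x
              + T.R v x x v + T.R v x v x + T.R v v x x)
          + ((t^3:ℝ):ℂ) * (T.R x x x v + T.R x x v x + T.R x v x x + T.R v x x x)
          + ((t^4:ℝ):ℂ) * T.R x x x x := by
      simp only [T.map_add₁, T.map_add₂, T.map_add₃, T.map_add₄,
        T.map_smul₁, T.map_smul₂, T.map_smul₃, T.map_smul₄, Complex.conj_ofReal]
      push_cast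
      ring
    rw [hC]
    simp only [hkdef, hA1, hA2, hA3, hA4, Complex.add_re, Complex.re_ofReal_mul]
    ring
  -- norm expansion
  have hn2 : ∀ t : ℝ, ‖v + (t:ℂ)•x‖^2 = 1 + 2*α*t + t^2 := by
    intro t
    rw [@norm_add_sq ℂ, inner_smul_right]
    simp [norm_smul, hv, hx, Complex.re_ofReal_mul]
    ring
  -- minimality gives nonnegativity of the quartic
  have key : ∀ t : ℝ, |t| < 1 →
      0 ≤ (A1 - 4*k*α)*t + (A2 - 2*k - 4*k*α^2)*t^2 + (A3 - 4*k*α)*t^3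
          + (A4 - k)*t^4 := by
    intro t ht
    set u := v + (t:ℂ)•x with hu
    have huW : u ∈ W := W.add_mem hvW (W.smul_mem _ hxW)
    have htn : ‖(t:ℂ)•x‖ = |t| := by
      simp [norm_smul, hx]
    have hupos : 0 < ‖u‖ := by
      have h1 : ‖v‖ ≤ ‖u‖ + ‖(t:ℂ)•x‖ := by
        have hvu : v = u - (t:ℂ)•x := by rw [hu]; abel
        calc ‖v‖ = ‖u - (t:ℂ)•x‖ := by rw [← hvu]
          _ ≤ ‖u‖ + ‖(t:ℂ)•x‖ := norm_sub_le _ _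
      rw [htn, hv] at h1
      linarith
    set s := ‖u‖ with hs
    have hsne : (s:ℝ) ≠ 0 := ne_of_gt hupos
    have hnW : ((s⁻¹:ℝ):ℂ) • u ∈ W := W.smul_mem _ huW
    have hn1 : ‖((s⁻¹:ℝ):ℂ) • u‖ = 1 := by
      rw [norm_smul, Complex.norm_real, Real.norm_eq_abs, abs_of_pos (inv_pos.mpr hupos)]
      field_simp
      exact hs.symm
    have hm := hmin _ hnW hn1
    have hscale : T.R (((s⁻¹:ℝ):ℂ) • u) (((s⁻¹:ℝ):ℂ) • u) (((s⁻¹:ℝ):ℂ) • u)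
        (((s⁻¹:ℝ):ℂ) • u) = (((s⁻¹)^4 : ℝ):ℂ) * T.R u u u u := by
      rw [T.map_smul₁, T.map_smul₂, T.map_smul₃, T.map_smul₄, Complex.conj_ofReal]
      push_cast
      ring
    rw [hscale, Complex.re_ofReal_mul] at hm
    -- hm : k ≤ s⁻¹^4 * (T.R u u u u).re
    have hRe : (T.R u u u u).re = k + A1*t + A2*t^2 + A3*t^3 + A4*t^4 := expand t
    have hm2 : k * s^4 ≤ (T.R u u u u).re := by
      have := mul_le_mul_of_nonneg_right hm (by positivity : (0:ℝ) ≤ s^4)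
      calc k * s^4 ≤ s⁻¹^4 * (T.R u u u u).re * s^4 := this
        _ = (T.R u u u u).re := by field_simp
    have hs4 : s^4 = (1 + 2*α*t + t^2)^2 := by
      have : s^4 = (s^2)^2 := by ring
      rw [this, hs, hn2 t]
    rw [hRe, hs4] at hm2
    nlinarith [hm2]
  -- extract the quadratic coefficient
  have hq : ∀ t : ℝ, 0 < t → t < 1 → 0 ≤ (A2 - 2*k - 4*k*α^2) + (A4 - k)*t^2 := by
    intro t ht0 ht1
    have h1 := key t (by rw [abs_of_pos ht0]; exact ht1)
    have h2 := key (-t) (by rw [abs_neg, abs_of_pos ht0]; exact ht1)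
    nlinarith [mul_pos ht0 ht0]
  have hc2 : 0 ≤ A2 - 2*k - 4*k*α^2 := by
    have hε : ∀ ε > (0:ℝ), 0 ≤ (A2 - 2*k - 4*k*α^2) + ε := by
      intro ε hε
      set t := min (1/2) (Real.sqrt (ε / (|A4 - k| + 1))) with htdef
      have hd : (0:ℝ) < ε / (|A4 - k| + 1) := by positivity
      have ht0 : 0 < t := lt_min (by norm_num) (Real.sqrt_pos.mpr hd)
      have ht1 : t < 1 := lt_of_le_of_lt (min_le_left _ _) (by norm_num)
      have hts : t^2 ≤ ε / (|A4 - k| + 1) := by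
        have h1 : t ≤ Real.sqrt (ε / (|A4 - k| + 1)) := min_le_right _ _
        have h2 : t^2 ≤ (Real.sqrt (ε / (|A4 - k| + 1)))^2 := by
          nlinarith [ht0.le, h1]
        rwa [Real.sq_sqrt hd.le] at h2
      have hbound : (A4 - k) * t^2 ≤ ε := by
        have h3 : (A4 - k) * t^2 ≤ |A4 - k| * t^2 := by
          nlinarith [le_abs_self (A4 - k), sq_nonneg t]
        have h4 : |A4 - k| * t^2 ≤ (|A4 - k| + 1) * (ε / (|A4 - k| + 1)) := by
          apply mul_le_mul (by linarith [abs_nonneg (A4 - k)]) hts (sq_nonneg t)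
          positivity
        have h5 : (|A4 - k| + 1) * (ε / (|A4 - k| + 1)) = ε := by
          field_simp
        linarith
      have := hq t ht0 ht1
      linarith
    by_contra h
    push_neg at h
    have := hε ((-(A2 - 2*k - 4*k*α^2))/2) (by linarith)
    linarith
  -- translate A2 via the Kähler symmetries
  have e1 : T.R x x v v = T.R v v x x := T.symm_pair x x v v
  have e2 : T.R x v v x = T.R v v x x := T.symm_exch x v v x
  have e3 : T.R v x x v = T.R v v x x := by
    rw [T.symm_exch v x x v]; exact T.symm_pair x x v v
  have e4 : (T.R v x v x).re = (T.R x v x v).re := by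
    rw [← T.symm_conj x v x v, Complex.conj_re]
  have hA2' : A2 = 4 * (T.R v v x x).re + 2 * (T.R x v x v).re := by
    rw [hA2, e1, e2, e3]
    simp only [Complex.add_re]
    rw [e4]
    ring
  rw [hA2'] at hc2
  nlinarith [mul_nonneg hk0 (sq_nonneg α)]

/-- Lemma 2.4 (second part): if the holomorphic sectional curvature is
semi-positive, then a unit minimizer `v` of it on a subspace `W` satisfies
`R(v,v̄,x,x̄) ≥ 0` for every `x ∈ W`. -/
theorem min_hsc_bisectional_nonneg
    {V : Type*} [NormedAddCommGroup V] [InnerProductSpace ℂ V]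
    [FiniteDimensional ℂ V]
    (T : KahlerCurvatureTensor V)
    (hsp : ∀ u : V, 0 ≤ (T.R u u u u).re)
    (W : Submodule ℂ V)
    (v : V) (hvW : v ∈ W) (hv : ‖v‖ = 1)
    (hmin : ∀ x ∈ W, ‖x‖ = 1 → (T.R v v v v).re ≤ (T.R x x x x).re) :
    ∀ x ∈ W, 0 ≤ (T.R v v x x).re := by
  intro x hxW
  rcases eq_or_ne x 0 with hx0 | hx0
  · have h0 : T.R v v (0:V) 0 = 0 := by
      have h := T.map_smul₃ 0 v v 0 0
      simpa using h
    rw [hx0, h0]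
    simp
  · have hc : (0:ℝ) < ‖x‖ := norm_pos_iff.mpr hx0
    set c := ‖x‖ with hcdef
    set y := ((c⁻¹:ℝ):ℂ) • x with hydef
    have hyW : y ∈ W := W.smul_mem _ hxW
    have hy1 : ‖y‖ = 1 := by
      rw [hydef, norm_smul, Complex.norm_real, Real.norm_eq_abs,
        abs_of_pos (inv_pos.mpr hc)]
      field_simp
      exact hcdef.symm
    have h1 := core_min_hsc T hsp W v hvW hv hmin y hyW hy1
    have hIyW : Complex.I • y ∈ W := W.smul_mem _ hyW
    have hIy1 : ‖Complex.I • y‖ = 1 := by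
      rw [norm_smul, Complex.norm_I, one_mul, hy1]
    have h2 := core_min_hsc T hsp W v hvW hv hmin (Complex.I • y) hIyW hIy1
    have e1 : T.R v v (Complex.I • y) (Complex.I • y) = T.R v v y y := by
      rw [T.map_smul₃, T.map_smul₄, Complex.conj_I]
      linear_combination (-(T.R v v y y)) * Complex.I_sq
    have e2 : T.R (Complex.I • y) v (Complex.I • y) v = -(T.R y v y v) := by
      rw [T.map_smul₁, T.map_smul₃]
      linear_combination (T.R y v y v) * Complex.I_sq
    rw [e1, e2] at h2
    rw [Complex.neg_re] at h2
    have hy : 0 ≤ (T.R v v y y).re := by linarith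
    have e3 : T.R v v y y = ((c⁻¹^2:ℝ):ℂ) * T.R v v x x := by
      rw [hydef, T.map_smul₃, T.map_smul₄, Complex.conj_ofReal]
      push_cast
      ring
    rw [e3, Complex.re_ofReal_mul] at hy
    nlinarith [pow_pos (inv_pos.mpr hc) 2, hy]
end

section
/- Let V be a finite-dimensional complex inner product space, R a Kähler curvature tensor on V with semi-positive holomorphic sectional curvature, and W ⊆ V a complex linear subspace. Suppose a vector v ∈ V satisfies R(v,v,v,v) = 0 and R(v,v,w,w) = 0 for every w ∈ W. Then R(v,x,y,z) = 0 for all x,y,z ∈ W. In particular, if the hypotheses hold with W = V, then v is truly flat for R. -/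
open Filter Topology in
private lemma kct_expand {V : Type*} [NormedAddCommGroup V] [InnerProductSpace ℂ V]
    (T : KahlerCurvatureTensor V) (v u : V) (c : ℂ) :
    T.R (v + c • u) (v + c • u) (v + c • u) (v + c • u)
      = T.R v v v v
        + c * (T.R u v v v + T.R v v u v)
        + (starRingEnd ℂ c) * (T.R v u v v + T.R v v v u)
        + c^2 * T.R u v u v
        + (starRingEnd ℂ c)^2 * T.R v u v u
        + (c * starRingEnd ℂ c) * (T.R u u v v + T.R u v v u + T.R v u u v + T.R v v u u)
        + c^2 * starRingEnd ℂ c * (T.R u u u v + T.R u v u u)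
        + c * (starRingEnd ℂ c)^2 * (T.R u u v u + T.R v u u u)
        + (c * starRingEnd ℂ c)^2 * T.R u u u u := by
  simp only [T.map_add₁, T.map_add₂, T.map_add₃, T.map_add₄,
    T.map_smul₁, T.map_smul₂, T.map_smul₃, T.map_smul₄]
  ring

private lemma kct_expand3 {V : Type*} [NormedAddCommGroup V] [InnerProductSpace ℂ V]
    (T : KahlerCurvatureTensor V) (x y v : V) (lam : ℂ) :
    T.R (x + lam • y) (x + lam • y) (x + lam • y) v
      = T.R x x x v
        + lam * (T.R y x x v + T.R x x y v)
        + (starRingEnd ℂ lam) * T.R x y x v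
        + (lam * starRingEnd ℂ lam) * (T.R y y x v + T.R x y y v)
        + lam^2 * T.R y x y v
        + lam^2 * starRingEnd ℂ lam * T.R y y y v := by
  simp only [T.map_add₁, T.map_add₂, T.map_add₃,
    T.map_smul₁, T.map_smul₂, T.map_smul₃]
  ring

open Filter Topology

private lemma poly_tendsto (a b c d : ℝ) :
    Tendsto (fun t : ℝ => a + b*t + c*t^2 + d*t^3) (nhds 0) (nhds a) := by
  have hc : Continuous fun t : ℝ => a + b*t + c*t^2 + d*t^3 := by continuity
  simpa using hc.tendsto 0

private lemma coeff1_eq_zero {p1 p2 p3 p4 : ℝ}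
    (h : ∀ t : ℝ, 0 ≤ p1*t + p2*t^2 + p3*t^3 + p4*t^4) : p1 = 0 := by
  have key : ∀ t : ℝ, 0 ≤ t * (p1 + p2*t + p3*t^2 + p4*t^3) := by
    intro t
    have h1 := h t
    have h2 : p1*t + p2*t^2 + p3*t^3 + p4*t^4 = t * (p1 + p2*t + p3*t^2 + p4*t^3) := by ring
    linarith [h2 ▸ h1]
  have hge : 0 ≤ p1 := by
    refine ge_of_tendsto ((poly_tendsto p1 p2 p3 p4).mono_left (nhdsWithin_le_nhds (s := Set.Ioi 0))) ?_
    filter_upwards [self_mem_nhdsWithin] with t ht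
    have ht' : (0:ℝ) < t := ht
    nlinarith [key t]
  have hle : p1 ≤ 0 := by
    refine le_of_tendsto ((poly_tendsto p1 p2 p3 p4).mono_left (nhdsWithin_le_nhds (s := Set.Iio 0))) ?_
    filter_upwards [self_mem_nhdsWithin] with t ht
    have ht' : t < 0 := ht
    nlinarith [key t]
  linarith

private lemma coeff2_nonneg {p2 p3 p4 : ℝ}
    (h : ∀ t : ℝ, 0 ≤ p2*t^2 + p3*t^3 + p4*t^4) : 0 ≤ p2 := by
  have key : ∀ t : ℝ, 0 ≤ t^2 * (p2 + p3*t + p4*t^2) := by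
    intro t
    have h1 := h t
    have h2 : p2*t^2 + p3*t^3 + p4*t^4 = t^2 * (p2 + p3*t + p4*t^2) := by ring
    linarith [h2 ▸ h1]
  refine ge_of_tendsto ((poly_tendsto p2 p3 p4 0).mono_left (nhdsWithin_le_nhds (s := Set.Ioi 0))) ?_
  filter_upwards [self_mem_nhdsWithin] with t ht
  have ht' : (0:ℝ) < t := ht
  have ht2 : (0:ℝ) < t^2 := by positivity
  nlinarith [key t, ht2]

private lemma coeff3_eq_zero {p3 p4 : ℝ}
    (h : ∀ t : ℝ, 0 ≤ p3*t^3 + p4*t^4) : p3 = 0 := by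
  have key : ∀ t : ℝ, 0 ≤ t^3 * (p3 + p4*t) := by
    intro t
    have h1 := h t
    have h2 : p3*t^3 + p4*t^4 = t^3 * (p3 + p4*t) := by ring
    linarith [h2 ▸ h1]
  have hge : 0 ≤ p3 := by
    refine ge_of_tendsto ((poly_tendsto p3 p4 0 0).mono_left (nhdsWithin_le_nhds (s := Set.Ioi 0))) ?_
    filter_upwards [self_mem_nhdsWithin] with t ht
    have ht' : (0:ℝ) < t := ht
    have ht3 : (0:ℝ) < t^3 := by positivity
    nlinarith [key t, ht3]
  have hle : p3 ≤ 0 := by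
    refine le_of_tendsto ((poly_tendsto p3 p4 0 0).mono_left (nhdsWithin_le_nhds (s := Set.Iio 0))) ?_
    filter_upwards [self_mem_nhdsWithin] with t ht
    have ht' : t < 0 := ht
    have ht3 : t^3 < 0 := Odd.pow_neg (by decide) ht'
    nlinarith [key t, ht3]
  linarith

private lemma re_poly (t : ℝ) (w1 w2 w3 w4 : ℂ) :
    ((t:ℂ) * w1 + (t:ℂ)^2 * w2 + (t:ℂ)^3 * w3 + (t:ℂ)^4 * w4).re
      = w1.re * t + w2.re * t^2 + w3.re * t^3 + w4.re * t^4 := by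
  simp only [← Complex.ofReal_pow, Complex.add_re, Complex.re_ofReal_mul]; ring

private lemma re_poly2 (t : ℝ) (w2 w3 w4 : ℂ) :
    ((t:ℂ)^2 * w2 + (t:ℂ)^3 * w3 + (t:ℂ)^4 * w4).re
      = w2.re * t^2 + w3.re * t^3 + w4.re * t^4 := by
  simp only [← Complex.ofReal_pow, Complex.add_re, Complex.re_ofReal_mul]; ring

private lemma re_poly3 (t : ℝ) (w3 w4 : ℂ) :
    ((t:ℂ)^3 * w3 + (t:ℂ)^4 * w4).re = w3.re * t^3 + w4.re * t^4 := by
  simp only [← Complex.ofReal_pow, Complex.add_re, Complex.re_ofReal_mul]; ring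

/-- Lemma 2.7: if the holomorphic sectional curvature is semi-positive,
`R(v,v̄,v,v̄) = 0`, and `R(v,v̄,w,w̄) = 0` for every `w` in a subspace `W`,
then `R(v,x̄,y,z̄) = 0` for all `x,y,z ∈ W`; in particular, if this holds with
`W = V` then `v` is truly flat. -/
theorem truly_flat_of_vanishing_bisectional
    {V : Type*} [NormedAddCommGroup V] [InnerProductSpace ℂ V]
    [FiniteDimensional ℂ V]
    (T : KahlerCurvatureTensor V)
    (hsp : ∀ u : V, 0 ≤ (T.R u u u u).re)
    (W : Submodule ℂ V) (v : V)
    (hv : T.R v v v v = 0)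
    (hbis : ∀ w ∈ W, T.R v v w w = 0) :
    (∀ x ∈ W, ∀ y ∈ W, ∀ z ∈ W, T.R v x y z = 0) ∧
    (W = ⊤ → ∀ x y z : V, T.R v x y z = 0) := by
  -- Step A : R(u, v, v, v) = 0 for every u
  have stepA : ∀ u : V, T.R u v v v = 0 := by
    intro u
    have e1 : T.R v v u v = T.R u v v v := T.symm_exch v v u v
    have e2 : T.R v u v v = starRingEnd ℂ (T.R u v v v) := (T.symm_conj u v v v).symm
    have e3 : T.R v v v u = starRingEnd ℂ (T.R u v v v) := by
      have h := T.symm_conj v v u v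
      rw [e1] at h
      exact h.symm
    have hcoef : ∀ μ : ℂ,
        (μ * (T.R u v v v + T.R u v v v)
          + starRingEnd ℂ μ * (starRingEnd ℂ (T.R u v v v) + starRingEnd ℂ (T.R u v v v))).re
          = 0 := by
      intro μ
      refine coeff1_eq_zero (p2 := (μ^2 * T.R u v u v + (starRingEnd ℂ μ)^2 * T.R v u v u
          + (μ * starRingEnd ℂ μ) * (T.R u u v v + T.R u v v u + T.R v u u v + T.R v v u u)).re)
        (p3 := (μ^2 * starRingEnd ℂ μ * (T.R u u u v + T.R u v u u)
          + μ * (starRingEnd ℂ μ)^2 * (T.R u u v u + T.R v u u u)).re)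
        (p4 := ((μ * starRingEnd ℂ μ)^2 * T.R u u u u).re) (fun t => ?_)
      have h0 := hsp (v + ((t:ℂ) * μ) • u)
      have hc : T.R (v + ((t:ℂ)*μ) • u) (v + ((t:ℂ)*μ) • u) (v + ((t:ℂ)*μ) • u)
            (v + ((t:ℂ)*μ) • u)
          = (t:ℂ) * (μ * (T.R u v v v + T.R u v v v)
              + starRingEnd ℂ μ * (starRingEnd ℂ (T.R u v v v) + starRingEnd ℂ (T.R u v v v)))
            + (t:ℂ)^2 * (μ^2 * T.R u v u v + (starRingEnd ℂ μ)^2 * T.R v u v u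
              + (μ * starRingEnd ℂ μ) * (T.R u u v v + T.R u v v u + T.R v u u v + T.R v v u u))
            + (t:ℂ)^3 * (μ^2 * starRingEnd ℂ μ * (T.R u u u v + T.R u v u u)
              + μ * (starRingEnd ℂ μ)^2 * (T.R u u v u + T.R v u u u))
            + (t:ℂ)^4 * ((μ * starRingEnd ℂ μ)^2 * T.R u u u u) := by
        rw [kct_expand, hv, e1, e2, e3]
        simp only [map_mul, Complex.conj_ofReal]
        ring
      rw [hc, re_poly] at h0
      exact h0
    have h1 := hcoef 1
    have hI := hcoef Complex.I
    simp only [map_one, one_mul, Complex.conj_I, Complex.add_re, Complex.mul_re,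
      Complex.neg_re, Complex.neg_im, Complex.I_re, Complex.I_im, Complex.conj_re,
      Complex.conj_im, Complex.one_re, Complex.one_im, Complex.add_im] at h1 hI
    apply Complex.ext <;> simp <;> linarith
  -- facts from hbis, usable for any w in W
  have hAfacts : ∀ u : V, T.R v v u v = 0 ∧ T.R v u v v = 0 ∧ T.R v v v u = 0 := by
    intro u
    refine ⟨?_, ?_, ?_⟩
    · rw [T.symm_exch v v u v]; exact stepA u
    · rw [← T.symm_conj u v v v, stepA u]; exact map_zero _
    · rw [← T.symm_conj v v u v, T.symm_exch v v u v, stepA u]; exact map_zero _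
  -- Step B : R(w, v, w, v) = 0 for every w in W
  have stepB : ∀ w ∈ W, T.R w v w v = 0 := by
    intro w hw
    obtain ⟨hA1, hA2, hA3⟩ := hAfacts w
    have hA : T.R w v v v = 0 := stepA w
    have hB1 : T.R v v w w = 0 := hbis w hw
    have hB2 : T.R w w v v = 0 := by rw [T.symm_pair w w v v]; exact hB1
    have hB3 : T.R w v v w = 0 := by rw [T.symm_exch w v v w]; exact hB1
    have hB4 : T.R v w w v = 0 := by rw [T.symm_exch v w w v]; exact hB2
    have hD' : T.R v w v w = starRingEnd ℂ (T.R w v w v) := (T.symm_conj w v w v).symm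
    have coefB : ∀ μ : ℂ,
        0 ≤ (μ^2 * T.R w v w v + (starRingEnd ℂ μ)^2 * starRingEnd ℂ (T.R w v w v)).re := by
      intro μ
      refine coeff2_nonneg (p3 := (μ^2 * starRingEnd ℂ μ * (T.R w w w v + T.R w v w w)
          + μ * (starRingEnd ℂ μ)^2 * (T.R w w v w + T.R v w w w)).re)
        (p4 := ((μ * starRingEnd ℂ μ)^2 * T.R w w w w).re) (fun t => ?_)
      have h0 := hsp (v + ((t:ℂ) * μ) • w)
      have hc : T.R (v + ((t:ℂ)*μ) • w) (v + ((t:ℂ)*μ) • w) (v + ((t:ℂ)*μ) • w)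
            (v + ((t:ℂ)*μ) • w)
          = (t:ℂ)^2 * (μ^2 * T.R w v w v + (starRingEnd ℂ μ)^2 * starRingEnd ℂ (T.R w v w v))
            + (t:ℂ)^3 * (μ^2 * starRingEnd ℂ μ * (T.R w w w v + T.R w v w w)
              + μ * (starRingEnd ℂ μ)^2 * (T.R w w v w + T.R v w w w))
            + (t:ℂ)^4 * ((μ * starRingEnd ℂ μ)^2 * T.R w w w w) := by
        rw [kct_expand, hv, hA, hA1, hA2, hA3, hB1, hB2, hB3, hB4, hD']
        simp only [map_mul, Complex.conj_ofReal]
        ring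
      rw [hc, re_poly2] at h0
      exact h0
    have c1 := coefB 1
    have cI := coefB Complex.I
    have cP := coefB (1 + Complex.I)
    have cM := coefB (1 - Complex.I)
    simp only [map_add, map_sub, map_one, Complex.conj_I, pow_two, Complex.mul_re,
      Complex.mul_im, Complex.add_re, Complex.add_im, Complex.sub_re, Complex.sub_im,
      Complex.one_re, Complex.one_im, Complex.I_re, Complex.I_im, Complex.conj_re,
      Complex.conj_im, Complex.neg_re, Complex.neg_im, one_mul, mul_one] at c1 cI cP cM
    norm_num at c1 cI cP cM
    apply Complex.ext <;> simp <;> linarith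
  -- Step C : R(w, w, w, v) = 0 for every w in W
  have stepC : ∀ w ∈ W, T.R w w w v = 0 := by
    intro w hw
    obtain ⟨hA1, hA2, hA3⟩ := hAfacts w
    have hA : T.R w v v v = 0 := stepA w
    have hB1 : T.R v v w w = 0 := hbis w hw
    have hB2 : T.R w w v v = 0 := by rw [T.symm_pair w w v v]; exact hB1
    have hB3 : T.R w v v w = 0 := by rw [T.symm_exch w v v w]; exact hB1
    have hB4 : T.R v w w v = 0 := by rw [T.symm_exch v w w v]; exact hB2
    have hD : T.R w v w v = 0 := stepB w hw
    have hD2 : T.R v w v w = 0 := by rw [← T.symm_conj w v w v, hD]; exact map_zero _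
    have hC2 : T.R w v w w = T.R w w w v := T.symm_pair w v w w
    have hC3 : T.R w w v w = starRingEnd ℂ (T.R w w w v) := (T.symm_conj w w w v).symm
    have hC4 : T.R v w w w = starRingEnd ℂ (T.R w w w v) := by
      rw [T.symm_pair v w w w]; exact hC3
    have coefC : ∀ μ : ℂ,
        (μ^2 * starRingEnd ℂ μ * (T.R w w w v + T.R w w w v)
          + μ * (starRingEnd ℂ μ)^2
            * (starRingEnd ℂ (T.R w w w v) + starRingEnd ℂ (T.R w w w v))).re = 0 := by
      intro μ
      refine coeff3_eq_zero (p4 := ((μ * starRingEnd ℂ μ)^2 * T.R w w w w).re) (fun t => ?_)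
      have h0 := hsp (v + ((t:ℂ) * μ) • w)
      have hc : T.R (v + ((t:ℂ)*μ) • w) (v + ((t:ℂ)*μ) • w) (v + ((t:ℂ)*μ) • w)
            (v + ((t:ℂ)*μ) • w)
          = (t:ℂ)^3 * (μ^2 * starRingEnd ℂ μ * (T.R w w w v + T.R w w w v)
              + μ * (starRingEnd ℂ μ)^2
                * (starRingEnd ℂ (T.R w w w v) + starRingEnd ℂ (T.R w w w v)))
            + (t:ℂ)^4 * ((μ * starRingEnd ℂ μ)^2 * T.R w w w w) := by
        rw [kct_expand, hv, hA, hA1, hA2, hA3, hB1, hB2, hB3, hB4, hD, hD2, hC2, hC3, hC4]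
        simp only [map_mul, Complex.conj_ofReal]
        ring
      rw [hc, re_poly3] at h0
      exact h0
    have c1 := coefC 1
    have cI := coefC Complex.I
    simp only [map_one, Complex.conj_I, pow_two, Complex.mul_re, Complex.mul_im,
      Complex.add_re, Complex.add_im, Complex.one_re, Complex.one_im, Complex.I_re,
      Complex.I_im, Complex.conj_re, Complex.conj_im, Complex.neg_re, Complex.neg_im,
      one_mul, mul_one, neg_mul, mul_neg, neg_neg] at c1 cI
    apply Complex.ext <;> simp <;> linarith
  -- Step Q : R(x, y, x, v) = 0 for x, y in W
  have stepQ : ∀ x ∈ W, ∀ y ∈ W, T.R x y x v = 0 := by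
    intro x hx y hy
    have E : ∀ lam : ℂ,
        lam * (T.R y x x v + T.R x x y v) + starRingEnd ℂ lam * T.R x y x v
          + (lam * starRingEnd ℂ lam) * (T.R y y x v + T.R x y y v)
          + lam^2 * T.R y x y v = 0 := by
      intro lam
      have h := stepC _ (W.add_mem hx (W.smul_mem lam hy))
      rw [kct_expand3, stepC x hx, stepC y hy] at h
      linear_combination h
    have E1 := E 1
    have Em1 := E (-1)
    have EI := E Complex.I
    have EmI := E (-Complex.I)
    simp only [map_one, map_neg, Complex.conj_I, neg_neg] at E1 Em1 EI EmI
    have hPQ : (T.R y x x v + T.R x x y v) + T.R x y x v = 0 := by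
      linear_combination (E1 - Em1) / 2
    have hPQ2 : Complex.I * ((T.R y x x v + T.R x x y v) - T.R x y x v) = 0 := by
      linear_combination (EI - EmI) / 2
    have hPQ3 : (T.R y x x v + T.R x x y v) - T.R x y x v = 0 := by
      rcases mul_eq_zero.mp hPQ2 with h | h
      · exact absurd h Complex.I_ne_zero
      · exact h
    linear_combination (hPQ - hPQ3) / 2
  -- full polarization
  have stepQ3 : ∀ x ∈ W, ∀ y ∈ W, ∀ z ∈ W, T.R x y z v = 0 := by
    intro x hx y hy z hz
    have h := stepQ (x + z) (W.add_mem hx hz) y hy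
    rw [T.map_add₁, T.map_add₃, T.map_add₃, stepQ x hx y hy, stepQ z hz y hy,
      T.symm_exch z y x v] at h
    linear_combination h / 2
  have main : ∀ x ∈ W, ∀ y ∈ W, ∀ z ∈ W, T.R v x y z = 0 := by
    intro x hx y hy z hz
    have h : T.R x v z y = 0 := by
      rw [T.symm_pair x v z y]; exact stepQ3 z hz y hy x hx
    have h3 : starRingEnd ℂ (T.R v x y z) = 0 := by rw [T.symm_conj v x y z]; exact h
    simpa using congrArg (starRingEnd ℂ) h3
  exact ⟨main, fun hW x y z => main x (by simp [hW]) y (by simp [hW]) z (by simp [hW])⟩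
end

section
/- Let V be a finite-dimensional complex inner product space and R a Kähler curvature tensor on V with semi-positive holomorphic sectional curvature. Suppose v ∈ V satisfies R(v,v,v,v) = 0, and w ∈ V satisfies R(v,v,w,w) = 0. Then R(v,v,v,w) = 0 and R(v,w,w,w) = 0. -/
/-- Core: if `c1*t + c2*t² + c3*t³ + c4*t⁴ ≥ 0` for all small positive `t`, then `c1 ≥ 0`. -/
lemma half (c1 c2 c3 c4 : ℝ)
    (h : ∀ t : ℝ, 0 < t → 0 ≤ c1*t + c2*t^2 + c3*t^3 + c4*t^4) : 0 ≤ c1 := by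
  by_contra hc
  push_neg at hc
  set M : ℝ := |c2| + |c3| + |c4| with hM
  have hM0 : 0 ≤ M := by positivity
  set ε : ℝ := min 1 (-c1/(M+1)) with hε
  have hc1 : 0 < -c1 := by linarith
  have hε0 : 0 < ε := lt_min one_pos (by positivity)
  have hε1 : ε ≤ 1 := min_le_left _ _
  have hε2 : ε * (M+1) ≤ -c1 := by
    have h' := min_le_right 1 (-c1/(M+1))
    have hp : (0:ℝ) < M+1 := by positivity
    calc ε * (M+1) ≤ (-c1/(M+1)) * (M+1) := by nlinarith
    _ = -c1 := by field_simp
  have e3 : ε^3 ≤ ε^2 := by nlinarith [sq_nonneg ε]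
  have e4 : ε^4 ≤ ε^2 := by nlinarith [sq_nonneg ε, pow_pos hε0 2]
  have b2 : c2*ε^2 ≤ |c2| *ε^2 :=
    mul_le_mul_of_nonneg_right (le_abs_self c2) (sq_nonneg ε)
  have b3 : c3*ε^3 ≤ |c3| *ε^2 := by
    calc c3*ε^3 ≤ |c3| *ε^3 :=
          mul_le_mul_of_nonneg_right (le_abs_self c3) (by positivity)
    _ ≤ |c3| *ε^2 := mul_le_mul_of_nonneg_left e3 (abs_nonneg c3)
  have b4 : c4*ε^4 ≤ |c4| *ε^2 := by
    calc c4*ε^4 ≤ |c4| *ε^4 :=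
          mul_le_mul_of_nonneg_right (le_abs_self c4) (by positivity)
    _ ≤ |c4| *ε^2 := mul_le_mul_of_nonneg_left e4 (abs_nonneg c4)
  have hh := h ε hε0
  have hMε : M*ε ≤ -c1 - ε := by nlinarith
  have : M*ε*ε ≤ (-c1 - ε)*ε := mul_le_mul_of_nonneg_right hMε (le_of_lt hε0)
  nlinarith [pow_pos hε0 2]

lemma aux1 (c1 c2 c3 c4 : ℝ) (h : ∀ t : ℝ, 0 ≤ c1*t + c2*t^2 + c3*t^3 + c4*t^4) :
    c1 = 0 := by
  have h1 : 0 ≤ c1 := half c1 c2 c3 c4 (fun t _ => h t)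
  have h2 : 0 ≤ -c1 := by
    apply half (-c1) c2 (-c3) c4
    intro t _
    have := h (-t)
    nlinarith
  linarith

lemma aux2 (c2 c3 c4 : ℝ) (h : ∀ t : ℝ, 0 ≤ c2*t^2 + c3*t^3 + c4*t^4) :
    0 ≤ c2 := by
  apply half c2 c3 c4 0
  intro t ht
  have := h t
  have h2 : 0 ≤ t * (c2*t + c3*t^2 + c4*t^3 + 0*t^4) := by nlinarith
  nlinarith [mul_pos ht ht]

lemma aux3 (c3 c4 : ℝ) (h : ∀ t : ℝ, 0 ≤ c3*t^3 + c4*t^4) : c3 = 0 := by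
  apply aux1 c3 c4 0 0
  intro t
  rcases eq_or_ne t 0 with rfl | ht
  · simp
  · have h0 := h t
    have ht2 : 0 < t^2 := by positivity
    have h2 : 0 ≤ t^2 * (c3*t + c4*t^2 + 0*t^3 + 0*t^4) := by nlinarith
    have := (mul_nonneg_iff_of_pos_left ht2).mp h2
    linarith


local notation "conj'" => starRingEnd ℂ

lemma expandR {V : Type*} [NormedAddCommGroup V] [InnerProductSpace ℂ V]
    (T : KahlerCurvatureTensor V) (v w : V) (a : ℂ) :
    T.R (v + a•w) (v + a•w) (v + a•w) (v + a•w) =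
      T.R v v v v
      + a * T.R w v v v + conj' a * T.R v w v v + a * T.R v v w v + conj' a * T.R v v v w
      + a * conj' a * T.R w w v v + a^2 * T.R w v w v + a * conj' a * T.R w v v w
      + a * conj' a * T.R v w w v + (conj' a)^2 * T.R v w v w + a * conj' a * T.R v v w w
      + a^2 * conj' a * T.R w w w v + a * (conj' a)^2 * T.R w w v w
      + a^2 * conj' a * T.R w v w w + a * (conj' a)^2 * T.R v w w w
      + a^2 * (conj' a)^2 * T.R w w w w := by
  simp only [T.map_add₁, T.map_add₂, T.map_add₃, T.map_add₄,
    T.map_smul₁, T.map_smul₂, T.map_smul₃, T.map_smul₄]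
  ring


/-- The intermediate vanishings in the proof of Lemma 2.7: semi-positive
holomorphic sectional curvature together with `R(v,v̄,v,v̄) = 0` and
`R(v,v̄,w,w̄) = 0` force `R(v,v̄,v,w̄) = 0` and `R(v,w̄,w,w̄) = 0`. -/
theorem vanishing_mixed_terms
    {V : Type*} [NormedAddCommGroup V] [InnerProductSpace ℂ V]
    [FiniteDimensional ℂ V]
    (T : KahlerCurvatureTensor V)
    (hsp : ∀ u : V, 0 ≤ (T.R u u u u).re)
    (v w : V)
    (hv : T.R v v v v = 0)
    (hvw : T.R v v w w = 0) :
    T.R v v v w = 0 ∧ T.R v w w w = 0 := by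
  set B := T.R v v v w with hB
  set D := T.R v w v w with hD
  set E := T.R v w w w with hE
  set F := T.R w w w w with hF
  have r_vwvv : T.R v w v v = B := T.symm_pair v w v v
  have r_vvwv : T.R v v w v = conj' B := (T.symm_conj v v v w).symm
  have r_wvvv : T.R w v v v = conj' B := by
    rw [T.symm_exch w v v v, r_vvwv]
  have r_wwvv : T.R w w v v = 0 := by rw [T.symm_pair w w v v, hvw]
  have r_wvvw : T.R w v v w = 0 := by rw [T.symm_exch w v v w, hvw]
  have r_vwwv : T.R v w w v = 0 := by rw [T.symm_exch v w w v, r_wwvv]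
  have r_wvwv : T.R w v w v = conj' D := (T.symm_conj v w v w).symm
  have r_wvww : T.R w v w w = conj' E := (T.symm_conj v w w w).symm
  have r_wwvw : T.R w w v w = E := T.symm_exch w w v w
  have r_wwwv : T.R w w w v = conj' E := by rw [T.symm_pair w w w v, r_wvww]
  have key : ∀ a : ℂ, T.R (v + a•w) (v + a•w) (v + a•w) (v + a•w) =
      2*a*conj' B + 2*conj' a*B + a^2*conj' D + (conj' a)^2*D
      + 2*a^2*conj' a*conj' E + 2*a*(conj' a)^2*E + a^2*(conj' a)^2*F := by
    intro a
    rw [expandR, hv, hvw, r_vwvv, r_vvwv, r_wvvv, r_wwvv, r_wvvw, r_vwwv,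
      r_wvwv, r_wvww, r_wwvw, r_wwwv]
    ring
  have hre : ∀ (t : ℝ) (u : ℂ),
      0 ≤ (2*u*conj' B + 2*conj' u*B).re * t
        + (u^2*conj' D + (conj' u)^2*D).re * t^2
        + (2*u^2*conj' u*conj' E + 2*u*(conj' u)^2*E).re * t^3
        + (u^2*(conj' u)^2*F).re * t^4 := by
    intro t u
    have h0 : (0:ℝ) ≤ ((t:ℂ) * (2*u*conj' B + 2*conj' u*B)
        + ((t:ℝ)^2 : ℝ) * (u^2*conj' D + (conj' u)^2*D)
        + ((t:ℝ)^3 : ℝ) * (2*u^2*conj' u*conj' E + 2*u*(conj' u)^2*E)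
        + ((t:ℝ)^4 : ℝ) * (u^2*(conj' u)^2*F)).re := by
      have h1 := hsp (v + ((t:ℂ)*u)•w)
      rw [key ((t:ℂ)*u)] at h1
      convert h1 using 2
      push_cast
      simp only [map_mul, Complex.conj_ofReal]
      ring
    simpa [Complex.add_re, Complex.re_ofReal_mul, mul_comm, ← Complex.ofReal_pow] using h0
  -- Step 1 : B = 0
  have hB0 : B = 0 := by
    have hc : (2*B*conj' B + 2*conj' B*B).re = 0 := by
      apply aux1 _ ((B^2*conj' D + (conj' B)^2*D).re)
        ((2*B^2*conj' B*conj' E + 2*B*(conj' B)^2*E).re)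
        ((B^2*(conj' B)^2*F).re)
      intro t
      have := hre t B
      linarith
    have heq : 2*B*conj' B + 2*conj' B*B = ((4 * Complex.normSq B : ℝ) : ℂ) := by
      push_cast
      linear_combination 4 * Complex.mul_conj B
    rw [heq, Complex.ofReal_re] at hc
    have : Complex.normSq B = 0 := by linarith
    exact Complex.normSq_eq_zero.mp this
  -- Step 2 : D = 0
  have hD0 : D = 0 := by
    obtain ⟨u, hu⟩ := IsAlgClosed.exists_pow_nat_eq (-D) (n := 2) (by norm_num)
    have hc : 0 ≤ (u^2*conj' D + (conj' u)^2*D).re := by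
      apply aux2 _ ((2*u^2*conj' u*conj' E + 2*u*(conj' u)^2*E).re)
        ((u^2*(conj' u)^2*F).re)
      intro t
      have := hre t u
      rw [hB0] at this
      simp only [map_zero, mul_zero, zero_mul, add_zero, zero_add, Complex.zero_re] at this
      linarith
    have hcu : (conj' u)^2 = -conj' D := by
      rw [← map_pow, hu, map_neg]
    have heq : u^2*conj' D + (conj' u)^2*D = ((-2 * Complex.normSq D : ℝ) : ℂ) := by
      rw [hu, hcu]
      push_cast
      linear_combination (-2 : ℂ) * Complex.mul_conj D
    rw [heq, Complex.ofReal_re] at hc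
    have : Complex.normSq D = 0 := by
      have := Complex.normSq_nonneg D
      linarith
    exact Complex.normSq_eq_zero.mp this
  -- Step 3 : E = 0
  have hE0 : E = 0 := by
    have hc : (2*(-E)^2*conj' (-E)*conj' E + 2*(-E)*(conj' (-E))^2*E).re = 0 := by
      apply aux3 _ (((-E)^2*(conj' (-E))^2*F).re)
      intro t
      have := hre t (-E)
      rw [hB0, hD0] at this
      simp only [map_zero, mul_zero, zero_mul, add_zero, zero_add, Complex.zero_re] at this
      linarith
    have heq : 2*(-E)^2*conj' (-E)*conj' E + 2*(-E)*(conj' (-E))^2*E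
        = ((-4 * (Complex.normSq E)^2 : ℝ) : ℂ) := by
      simp only [map_neg]
      push_cast
      linear_combination (-4 * (E * conj' E + (Complex.normSq E : ℂ))) * Complex.mul_conj E
    rw [heq, Complex.ofReal_re] at hc
    have : Complex.normSq E = 0 := by nlinarith [Complex.normSq_nonneg E]
    exact Complex.normSq_eq_zero.mp this
  exact ⟨hB0, hE0⟩
end

section
/- Let V be a finite-dimensional complex inner product space and R a Kähler curvature tensor on V with semi-positive holomorphic sectional curvature, and let W ⊆ V be a complex linear subspace with dim_ℂ W = m ≥ 1. Then there exists an orthonormal basis e_1, …, e_m of W such that for each i the vector e_i minimizes the holomorphic sectional curvature on span(e_i, e_{i+1}, …, e_m) (i.e. R(e_i,e_i,e_i,e_i) ≤ R(x,x,x,x) for every unit vector x ∈ span(e_i,…,e_m)), and consequently R(e_i,e_i,e_j,e_j) ≥ 0 for all 1 ≤ i, j ≤ m. -/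
namespace KahlerCurvatureTensor

variable {V : Type*} [NormedAddCommGroup V] [InnerProductSpace ℂ V]
variable (T : KahlerCurvatureTensor V)

lemma zero₁ (y z w : V) : T.R 0 y z w = 0 := by
  have := T.map_smul₁ 0 0 y z w; simpa using this

lemma zero₂ (x z w : V) : T.R x 0 z w = 0 := by
  have := T.map_smul₂ 0 x 0 z w; simpa using this

lemma zero₃ (x y w : V) : T.R x y 0 w = 0 := by
  have := T.map_smul₃ 0 x y 0 w; simpa using this

lemma zero₄ (x y z : V) : T.R x y z 0 = 0 := by
  have := T.map_smul₄ 0 x y z 0; simpa using this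

lemma sum₁ {ι : Type*} (s : Finset ι) (g : ι → V) (y z w : V) :
    T.R (∑ i ∈ s, g i) y z w = ∑ i ∈ s, T.R (g i) y z w :=
  map_sum (AddMonoidHom.mk' (fun x => T.R x y z w) (fun a b => T.map_add₁ a b y z w)) g s

lemma sum₂ {ι : Type*} (s : Finset ι) (g : ι → V) (x z w : V) :
    T.R x (∑ i ∈ s, g i) z w = ∑ i ∈ s, T.R x (g i) z w :=
  map_sum (AddMonoidHom.mk' (fun y => T.R x y z w) (fun a b => T.map_add₂ x a b z w)) g s

lemma sum₃ {ι : Type*} (s : Finset ι) (g : ι → V) (x y w : V) :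
    T.R x y (∑ i ∈ s, g i) w = ∑ i ∈ s, T.R x y (g i) w :=
  map_sum (AddMonoidHom.mk' (fun z => T.R x y z w) (fun a b => T.map_add₃ x y a b w)) g s

lemma sum₄ {ι : Type*} (s : Finset ι) (g : ι → V) (x y z : V) :
    T.R x y z (∑ i ∈ s, g i) = ∑ i ∈ s, T.R x y z (g i) :=
  map_sum (AddMonoidHom.mk' (fun w => T.R x y z w) (fun a b => T.map_add₄ x y z a b)) g s

variable [FiniteDimensional ℂ V]

lemma continuous_diag : Continuous fun u : V => T.R u u u u := by
  classical
  set b := Module.finBasis ℂ V with hb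
  have hrep : ∀ u : V, u = ∑ i, b.repr u i • b i := fun u => (b.sum_repr u).symm
  have expand : ∀ x y z w : V, T.R x y z w =
      ∑ i, ∑ j, ∑ k, ∑ l, b.repr x i * (starRingEnd ℂ) (b.repr y j) *
        (b.repr z k * (starRingEnd ℂ) (b.repr w l)) * T.R (b i) (b j) (b k) (b l) := by
    intro x y z w
    conv_lhs => rw [hrep x]
    rw [T.sum₁]
    refine Finset.sum_congr rfl fun i _ => ?_
    rw [T.map_smul₁]
    conv_lhs => rw [hrep y]
    rw [T.sum₂, Finset.mul_sum]
    refine Finset.sum_congr rfl fun j _ => ?_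
    rw [T.map_smul₂]
    conv_lhs => rw [hrep z]
    rw [T.sum₃, Finset.mul_sum, Finset.mul_sum]
    refine Finset.sum_congr rfl fun k _ => ?_
    rw [T.map_smul₃]
    conv_lhs => rw [hrep w]
    rw [T.sum₄, Finset.mul_sum, Finset.mul_sum, Finset.mul_sum]
    refine Finset.sum_congr rfl fun l _ => ?_
    rw [T.map_smul₄]
    ring
  have hcoord : ∀ i, Continuous fun u : V => b.repr u i := fun i =>
    (b.coord i).continuous_of_finiteDimensional
  have : (fun u : V => T.R u u u u) = fun u => ∑ i, ∑ j, ∑ k, ∑ l,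
      b.repr u i * (starRingEnd ℂ) (b.repr u j) *
        (b.repr u k * (starRingEnd ℂ) (b.repr u l)) * T.R (b i) (b j) (b k) (b l) :=
    funext fun u => expand u u u u
  rw [this]
  refine continuous_finset_sum _ fun i _ => continuous_finset_sum _ fun j _ =>
    continuous_finset_sum _ fun k _ => continuous_finset_sum _ fun l _ => ?_
  exact ((((hcoord i).mul ((Complex.continuous_conj).comp (hcoord j))).mul
    (((hcoord k)).mul ((Complex.continuous_conj).comp (hcoord l)))).mul continuous_const)

end KahlerCurvatureTensor

section
variable {V : Type*} [NormedAddCommGroup V] [InnerProductSpace ℂ V] [FiniteDimensional ℂ V]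

lemma exists_min_on_sphere (f : V → ℝ) (hf : Continuous f)
    (U : Submodule ℂ V) (hU : U ≠ ⊥) :
    ∃ e ∈ U, ‖e‖ = 1 ∧ ∀ x ∈ U, ‖x‖ = 1 → f e ≤ f x := by
  have hUc : IsClosed (U : Set V) := U.closed_of_finiteDimensional
  have hS : IsCompact ((U : Set V) ∩ Metric.sphere 0 1) :=
    ((isCompact_sphere (0 : V) 1).inter_left hUc)
  obtain ⟨x, hxU, hx0⟩ := Submodule.exists_mem_ne_zero_of_ne_bot hU
  have hxn : ‖x‖ ≠ 0 := norm_ne_zero_iff.2 hx0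
  have hne : ((U : Set V) ∩ Metric.sphere 0 1).Nonempty := by
    refine ⟨(↑(‖x‖⁻¹) : ℂ) • x, ?_, ?_⟩
    · exact U.smul_mem _ hxU
    · simp [norm_smul, inv_mul_cancel₀ hxn]
  obtain ⟨e, ⟨heU, hes⟩, hmin⟩ := hS.exists_isMinOn hne hf.continuousOn
  refine ⟨e, heU, by simpa using hes, fun y hyU hy1 => ?_⟩
  exact hmin ⟨hyU, by simp [hy1]⟩

end

namespace KahlerCurvatureTensor
variable {V : Type*} [NormedAddCommGroup V] [InnerProductSpace ℂ V]
variable (T : KahlerCurvatureTensor V)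

lemma foursum (e x : V) (s : ℝ) :
    (T.R (e + (s:ℂ)•x) (e + (s:ℂ)•x) (e + (s:ℂ)•x) (e + (s:ℂ)•x))
    + (T.R (e + (-(s:ℂ))•x) (e + (-(s:ℂ))•x) (e + (-(s:ℂ))•x) (e + (-(s:ℂ))•x))
    + (T.R (e + ((s:ℂ)*Complex.I)•x) (e + ((s:ℂ)*Complex.I)•x) (e + ((s:ℂ)*Complex.I)•x) (e + ((s:ℂ)*Complex.I)•x))
    + (T.R (e + (-((s:ℂ)*Complex.I))•x) (e + (-((s:ℂ)*Complex.I))•x) (e + (-((s:ℂ)*Complex.I))•x) (e + (-((s:ℂ)*Complex.I))•x))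
    = 4 * T.R e e e e
      + (4*(s:ℂ)^2) * (T.R x x e e + T.R x e e x + T.R e x x e + T.R e e x x)
      + (4*(s:ℂ)^4) * T.R x x x x := by
  simp only [T.map_add₁, T.map_add₂, T.map_add₃, T.map_add₄,
    T.map_smul₁, T.map_smul₂, T.map_smul₃, T.map_smul₄,
    map_neg, map_mul, Complex.conj_ofReal, Complex.conj_I]
  ring_nf
  simp only [Complex.I_sq, show Complex.I ^ 4 = 1 by norm_num [pow_succ, Complex.I_mul_I]]
  ring

end KahlerCurvatureTensor

namespace KahlerCurvatureTensor
variable {V : Type*} [NormedAddCommGroup V] [InnerProductSpace ℂ V] [FiniteDimensional ℂ V]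
variable (T : KahlerCurvatureTensor V)

/-- Key second-variation lemma: if `e` minimizes HSC on `U` and `x ⊥ e` is a unit
vector of `U`, then `Re R(e,e,x,x) ≥ 0` (given `Re R(e,e,e,e) ≥ 0`). -/
lemma key_nonneg (U : Submodule ℂ V) (e x : V)
    (he : e ∈ U) (hx : x ∈ U) (hne : ‖e‖ = 1) (hnx : ‖x‖ = 1)
    (hperp : (inner ℂ e x : ℂ) = 0)
    (h0 : 0 ≤ (T.R e e e e).re)
    (hmin : ∀ y ∈ U, ‖y‖ = 1 → (T.R e e e e).re ≤ (T.R y y y y).re) :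
    0 ≤ (T.R e e x x).re := by
  set H0 := (T.R e e e e).re with hH0
  set H1 := (T.R x x x x).re with hH1
  set A := (T.R e e x x).re with hA
  -- (a) norm computation
  have hnorm : ∀ t : ℂ, ‖e + t • x‖ ^ 2 = 1 + ‖t‖ ^ 2 := by
    intro t
    rw [@norm_add_sq ℂ]
    simp [inner_smul_right, hperp, hne, hnx, norm_smul]
  -- (b) minimality bound
  have hbound : ∀ t : ℂ,
      H0 * (1 + ‖t‖ ^ 2) ^ 2 ≤ (T.R (e + t • x) (e + t • x) (e + t • x) (e + t • x)).re := by
    intro t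
    set v := e + t • x with hv
    have hn2 : ‖v‖ ^ 2 = 1 + ‖t‖ ^ 2 := hnorm t
    have hnpos : 0 < ‖v‖ := by
      rw [← Real.sqrt_sq (norm_nonneg v), hn2]
      positivity
    set c : ℂ := ((‖v‖⁻¹ : ℝ) : ℂ) with hc
    have hvU : v ∈ U := U.add_mem he (U.smul_mem _ hx)
    have huU : c • v ∈ U := U.smul_mem _ hvU
    have hun : ‖c • v‖ = 1 := by
      rw [norm_smul, hc]
      simp [abs_of_pos (inv_pos.2 hnpos), inv_mul_cancel₀ hnpos.ne']
    have := hmin _ huU hun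
    rw [T.map_smul₁, T.map_smul₂, T.map_smul₃, T.map_smul₄, hc, Complex.conj_ofReal] at this
    have hre : ((((‖v‖⁻¹ : ℝ) : ℂ)) * (((‖v‖⁻¹ : ℝ) : ℂ) * ((((‖v‖⁻¹ : ℝ) : ℂ)) * ((((‖v‖⁻¹ : ℝ) : ℂ)) * T.R v v v v)))).re
        = (‖v‖⁻¹) ^ 4 * (T.R v v v v).re := by
      simp only [Complex.re_ofReal_mul]
      ring
    rw [hre] at this
    have h4 : (1 + ‖t‖ ^ 2) ^ 2 = ‖v‖ ^ 4 := by rw [← hn2]; ring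
    rw [h4]
    have hv4 : (0:ℝ) < ‖v‖ ^ 4 := by positivity
    calc H0 * ‖v‖ ^ 4 ≤ ((‖v‖⁻¹) ^ 4 * (T.R v v v v).re) * ‖v‖ ^ 4 :=
          mul_le_mul_of_nonneg_right this hv4.le
      _ = (T.R v v v v).re := by
          field_simp
  -- combine with foursum
  have hmain : ∀ s : ℝ, 4 * H0 * (1 + s ^ 2) ^ 2 ≤ 4 * H0 + 16 * s ^ 2 * A + 4 * s ^ 4 * H1 := by
    intro s
    have h1 := hbound ((s:ℂ))
    have h2 := hbound (-(s:ℂ))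
    have h3 := hbound ((s:ℂ) * Complex.I)
    have h4 := hbound (-((s:ℂ) * Complex.I))
    have hns : ‖(s:ℂ)‖ ^ 2 = s ^ 2 := by
      rw [Complex.norm_real]; exact sq_abs s
    have hns2 : ‖-(s:ℂ)‖ ^ 2 = s ^ 2 := by rw [norm_neg]; exact hns
    have hns3 : ‖(s:ℂ) * Complex.I‖ ^ 2 = s ^ 2 := by
      rw [norm_mul, Complex.norm_I, mul_one]; exact hns
    have hns4 : ‖-((s:ℂ) * Complex.I)‖ ^ 2 = s ^ 2 := by rw [norm_neg]; exact hns3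
    rw [hns] at h1; rw [hns2] at h2; rw [hns3] at h3; rw [hns4] at h4
    have hsum := T.foursum e x s
    -- symmetries: all four A-terms equal T.R e e x x
    have hA1 : T.R x x e e = T.R e e x x := T.symm_pair x x e e
    have hA2 : T.R x e e x = T.R e e x x := (T.symm_exch x e e x)
    have hA3 : T.R e x x e = T.R x x e e := T.symm_exch e x x e
    have hre : ((T.R (e + (s:ℂ)•x) (e + (s:ℂ)•x) (e + (s:ℂ)•x) (e + (s:ℂ)•x))
      + (T.R (e + (-(s:ℂ))•x) (e + (-(s:ℂ))•x) (e + (-(s:ℂ))•x) (e + (-(s:ℂ))•x))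
      + (T.R (e + ((s:ℂ)*Complex.I)•x) (e + ((s:ℂ)*Complex.I)•x) (e + ((s:ℂ)*Complex.I)•x) (e + ((s:ℂ)*Complex.I)•x))
      + (T.R (e + (-((s:ℂ)*Complex.I))•x) (e + (-((s:ℂ)*Complex.I))•x) (e + (-((s:ℂ)*Complex.I))•x) (e + (-((s:ℂ)*Complex.I))•x))).re
        = 4 * H0 + 16 * s ^ 2 * A + 4 * s ^ 4 * H1 := by
      rw [hsum, hA1, hA2, hA3, hA1]
      have : (4:ℂ) * T.R e e e e + (4*(s:ℂ)^2) * (T.R e e x x + T.R e e x x + T.R e e x x + T.R e e x x)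
          + (4*(s:ℂ)^4) * T.R x x x x
          = ((4:ℝ):ℂ) * T.R e e e e + ((16 * s^2 : ℝ) : ℂ) * T.R e e x x + ((4 * s^4 : ℝ):ℂ) * T.R x x x x := by
        push_cast; ring
      rw [this]
      simp only [Complex.add_re, Complex.re_ofReal_mul, hH0, hA, hH1]
    simp only [Complex.add_re] at hre
    linarith [h1, h2, h3, h4, hre.ge, hre.le]
  -- (d) conclude A ≥ 0
  by_contra hAneg
  push_neg at hAneg
  have hkey : ∀ s : ℝ, 0 ≤ 16 * s ^ 2 * A + 4 * s ^ 4 * H1 - (8 * H0 * s ^ 2 + 4 * H0 * s ^ 4) := by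
    intro s
    have := hmain s
    nlinarith [this]
  rcases le_or_gt H1 0 with h1 | h1
  · have := hkey 1
    nlinarith
  · have hApos : 0 < -A := neg_pos.2 hAneg
    set s := Real.sqrt (-(2*A) / H1) with hs
    have hspos : 0 < -(2*A) / H1 := div_pos (by linarith) h1
    have hs2 : s ^ 2 = -(2*A) / H1 := Real.sq_sqrt hspos.le
    have h := hkey s
    have hs4 : s ^ 4 = (s^2)^2 := by ring
    rw [hs4, hs2] at h
    have hne0 : H1 ≠ 0 := h1.ne'
    rw [div_pow] at h
    field_simp at h
    have hd : 0 < H1 * H1 ^ 2 := by positivity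
    nlinarith [mul_pos h1 (mul_pos hApos hApos), mul_nonneg (mul_nonneg h0 hApos.le) h1.le,
      mul_nonneg h0 (mul_nonneg hApos.le hApos.le), mul_pos (mul_pos h1 h1) (mul_pos hApos hApos),
      mul_nonneg (mul_nonneg (mul_nonneg h0 hApos.le) h1.le) h1.le,
      mul_nonneg (mul_nonneg h0 (mul_nonneg hApos.le hApos.le)) h1.le]
end KahlerCurvatureTensor

section
variable {V : Type*} [NormedAddCommGroup V] [InnerProductSpace ℂ V] [FiniteDimensional ℂ V]

lemma construct_basis (f : V → ℝ) (hf : Continuous f)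
    (hmin_exists : ∀ (U : Submodule ℂ V), U ≠ ⊥ →
      ∃ e ∈ U, ‖e‖ = 1 ∧ ∀ x ∈ U, ‖x‖ = 1 → f e ≤ f x) :
    ∀ (m : ℕ) (W : Submodule ℂ V), Module.finrank ℂ W = m →
    ∃ e : Fin m → V,
      (∀ i, e i ∈ W) ∧
      Orthonormal ℂ e ∧
      Submodule.span ℂ (Set.range e) = W ∧
      (∀ i : Fin m, ∀ x ∈ Submodule.span ℂ (e '' {j : Fin m | i ≤ j}),
        ‖x‖ = 1 → f (e i) ≤ f x) := by
  intro m
  induction m with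
  | zero =>
    intro W hdim
    refine ⟨Fin.elim0, fun i => i.elim0, ?_, ?_, fun i => i.elim0⟩
    · rw [orthonormal_iff_ite]; exact fun i => i.elim0
    · rw [Set.range_eq_empty, Submodule.span_empty]
      exact (Submodule.finrank_eq_zero.mp hdim).symm
  | succ m IH =>
    intro W hdim
    have hWne : W ≠ ⊥ := by
      intro h
      rw [h, finrank_bot] at hdim
      omega
    obtain ⟨e0, he0W, he0n, he0min⟩ := hmin_exists W hWne
    have he00 : e0 ≠ 0 := by intro h; rw [h, norm_zero] at he0n; norm_num at he0n
    have hle : (ℂ ∙ e0) ≤ W := (Submodule.span_singleton_le_iff_mem e0 W).2 he0W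
    set K := (ℂ ∙ e0)ᗮ ⊓ W with hK
    have hrankK : Module.finrank ℂ K = m := by
      have := Submodule.finrank_add_inf_finrank_orthogonal hle
      rw [finrank_span_singleton he00, hdim, ← hK] at this
      omega
    obtain ⟨e', he'K, he'on, he'span, he'min⟩ := IH K hrankK
    set e : Fin (m + 1) → V := Fin.cons e0 e' with he
    have heW : ∀ i, e i ∈ W := by
      intro i
      refine Fin.cases ?_ ?_ i
      · simpa [he] using he0W
      · intro j
        simpa [he] using (inf_le_right : K ≤ W) (he'K j)
    have hperp : ∀ j, (inner ℂ e0 (e' j) : ℂ) = 0 := by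
      intro j
      have := ((Submodule.mem_orthogonal _ _).1 ((inf_le_left : K ≤ (ℂ ∙ e0)ᗮ) (he'K j)))
      exact this e0 (Submodule.mem_span_singleton_self e0)
    have horth : Orthonormal ℂ e := by
      rw [orthonormal_iff_ite]
      intro i j
      refine Fin.cases ?_ ?_ i
      · refine Fin.cases ?_ ?_ j
        · simp only [he, Fin.cons_zero, if_pos rfl]
          rw [@inner_self_eq_norm_sq_to_K ℂ, he0n]; norm_num
        · intro j'
          simp only [he, Fin.cons_zero, Fin.cons_succ]
          rw [if_neg (Fin.succ_ne_zero j').symm]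
          exact hperp j'
      · intro i'
        refine Fin.cases ?_ ?_ j
        · simp only [he, Fin.cons_zero, Fin.cons_succ]
          rw [if_neg (Fin.succ_ne_zero i')]
          rw [← inner_conj_symm, hperp i', map_zero]
        · intro j'
          simp only [he, Fin.cons_succ, Fin.succ_inj]
          exact (orthonormal_iff_ite.1 he'on) i' j'
    have hspan : Submodule.span ℂ (Set.range e) = W := by
      rw [he, Fin.range_cons, Submodule.span_insert, he'span]
      refine le_antisymm (sup_le hle inf_le_right) ?_
      have hdisj : (ℂ ∙ e0) ⊓ K = ⊥ := by
        refine le_bot_iff.1 ?_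
        calc (ℂ ∙ e0) ⊓ K ≤ (ℂ ∙ e0) ⊓ (ℂ ∙ e0)ᗮ := inf_le_inf_left _ inf_le_left
          _ = ⊥ := (Submodule.orthogonal_disjoint _).eq_bot
      have hfr : Module.finrank ℂ ((ℂ ∙ e0) ⊔ K : Submodule ℂ V) = m + 1 := by
        have := Submodule.finrank_sup_add_finrank_inf_eq (ℂ ∙ e0) K
        rw [hdisj, finrank_bot, finrank_span_singleton he00, hrankK] at this
        omega
      exact le_of_eq (Submodule.eq_of_le_of_finrank_eq (sup_le hle inf_le_right)
        (by rw [hfr, hdim])).symm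
    refine ⟨e, heW, horth, hspan, ?_⟩
    intro i
    refine Fin.cases ?_ ?_ i
    · have himg : e '' {j : Fin (m+1) | (0 : Fin (m+1)) ≤ j} = Set.range e := by
        rw [show {j : Fin (m+1) | (0 : Fin (m+1)) ≤ j} = Set.univ from
          Set.eq_univ_of_forall fun j => Fin.zero_le j, Set.image_univ]
      rw [himg, hspan]
      simpa [he] using he0min
    · intro i'
      have himg : e '' {j : Fin (m+1) | i'.succ ≤ j} = e' '' {j : Fin m | i' ≤ j} := by
        ext y
        constructor
        · rintro ⟨j, hj, rfl⟩
          rcases Fin.eq_zero_or_eq_succ j with rfl | ⟨j', rfl⟩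
          · exact absurd (le_antisymm hj (Fin.zero_le _)) (Fin.succ_ne_zero i')
          · exact ⟨j', Fin.succ_le_succ_iff.1 hj, by simp [he]⟩
        · rintro ⟨j', hj', rfl⟩
          exact ⟨j'.succ, Fin.succ_le_succ_iff.2 hj', by simp [he]⟩
      rw [himg]
      simpa [he] using he'min i'

end

/-- Claim 3.3 (Step 2): for a Kähler curvature tensor with semi-positive
holomorphic sectional curvature and a subspace `W` of dimension `m ≥ 1`,
there is an orthonormal basis `e₁, …, e_m` of `W` such that each `e i`
minimizes the holomorphic sectional curvature on `span (e i, …, e m)`,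
and consequently `R(e i, e i, e j, e j) ≥ 0` for all `i, j`. -/
theorem exists_good_orthonormal_basis
    {V : Type*} [NormedAddCommGroup V] [InnerProductSpace ℂ V]
    [FiniteDimensional ℂ V]
    (T : KahlerCurvatureTensor V)
    (hsp : ∀ u : V, 0 ≤ (T.R u u u u).re)
    (W : Submodule ℂ V) (m : ℕ) (hm : 1 ≤ m)
    (hdim : Module.finrank ℂ W = m) :
    ∃ e : Fin m → V,
      (∀ i, e i ∈ W) ∧
      Orthonormal ℂ e ∧
      Submodule.span ℂ (Set.range e) = W ∧
      (∀ i : Fin m, ∀ x ∈ Submodule.span ℂ (e '' {j : Fin m | i ≤ j}),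
        ‖x‖ = 1 → (T.R (e i) (e i) (e i) (e i)).re ≤ (T.R x x x x).re) ∧
      (∀ i j : Fin m, 0 ≤ (T.R (e i) (e i) (e j) (e j)).re) := by
  classical
  have hf : Continuous fun u : V => (T.R u u u u).re :=
    Complex.continuous_re.comp T.continuous_diag
  obtain ⟨e, heW, horth, hspan, hmin⟩ :=
    construct_basis (fun u => (T.R u u u u).re) hf
      (fun U hU => exists_min_on_sphere _ hf U hU) m W hdim
  refine ⟨e, heW, horth, hspan, hmin, ?_⟩
  have main : ∀ i j : Fin m, i < j → 0 ≤ (T.R (e i) (e i) (e j) (e j)).re := by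
    intro i j hij
    refine T.key_nonneg (Submodule.span ℂ (e '' {k : Fin m | i ≤ k})) (e i) (e j)
      ?_ ?_ (horth.1 i) (horth.1 j) (horth.2 hij.ne) (hsp (e i)) (hmin i)
    · exact Submodule.subset_span ⟨i, le_refl i, rfl⟩
    · exact Submodule.subset_span ⟨j, hij.le, rfl⟩
  intro i j
  rcases lt_trichotomy i j with h | rfl | h
  · exact main i j h
  · exact hsp (e i)
  · rw [T.symm_pair]
    exact main j i h
end

section
/- Let V be a finite-dimensional complex inner product space and R a Kähler curvature tensor on V with semi-positive holomorphic sectional curvature. If v ∈ V is a unit vector minimizing the holomorphic sectional curvature on all of V (i.e. R(v,v,v,v) ≤ R(x,x,x,x) for every unit vector x ∈ V) and R(v,v,v,v) = 0, and if moreover R(v,v,x,x) = 0 for every x ∈ V, then every vector in the complex line spanned by v, and more generally every linear combination of such vectors v₁, …, v_k each satisfying these hypotheses, is truly flat for R; in particular the set of truly flat vectors of R is a complex linear subspace of V containing all such v. -/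
section TrulyFlatAux

variable {V : Type*} [NormedAddCommGroup V] [InnerProductSpace ℂ V]

lemma aux_eq_zero {a M : ℝ} (ha : 0 ≤ a) (hM : 0 ≤ M)
    (h : ∀ t : ℝ, 0 < t → t ≤ 1 → a ≤ t * M) : a = 0 := by
  by_contra h0
  have ha' : 0 < a := lt_of_le_of_ne ha (Ne.symm h0)
  have hM1 : (0:ℝ) < M + 1 := by linarith
  have htpos : (0:ℝ) < min 1 (a / (M + 1)) :=
    lt_min one_pos (div_pos ha' hM1)
  have hkey := h _ htpos (min_le_left _ _)
  have h2 : min 1 (a / (M + 1)) ≤ a / (M + 1) := min_le_right _ _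
  have h3 : a ≤ (a / (M + 1)) * M :=
    le_trans hkey (mul_le_mul_of_nonneg_right h2 hM)
  have h4 : (a / (M + 1)) * (M + 1) = a := div_mul_cancel₀ a (ne_of_gt hM1)
  have h5 : 0 < a / (M + 1) := div_pos ha' hM1
  nlinarith

lemma two_v_zero (T : KahlerCurvatureTensor V) (v : V)
    (hbis : ∀ x : V, T.R v v x x = 0) : ∀ x y : V, T.R v v x y = 0 := by
  intro x y
  have e1 := hbis (x + y)
  have e2 := hbis (x + Complex.I • y)
  simp only [T.map_add₃, T.map_add₄, T.map_smul₃, T.map_smul₄, hbis, Complex.conj_I,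
    mul_zero, add_zero, zero_add, neg_mul] at e1 e2
  linear_combination e1 / 2 + Complex.I * e2 / 2 +
    (T.R v v x y - T.R v v y x) / 2 * Complex.I_sq

lemma expand4 (T : KahlerCurvatureTensor V) (v w : V) (c : ℂ)
    (h2 : ∀ x y, T.R v v x y = 0)
    (h2' : ∀ x y, T.R x y v v = 0)
    (h2'' : ∀ x y, T.R x v v y = 0)
    (h2''' : ∀ x y, T.R v x y v = 0) :
    T.R (v + c • w) (v + c • w) (v + c • w) (v + c • w)
      = (starRingEnd ℂ) c ^ 2 * T.R v w v w + c ^ 2 * T.R w v w v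
        + 2 * (c * (starRingEnd ℂ) c ^ 2) * T.R v w w w
        + 2 * (c ^ 2 * (starRingEnd ℂ) c) * T.R w v w w
        + (c * (starRingEnd ℂ) c) ^ 2 * T.R w w w w := by
  have hE : T.R w w v w = T.R v w w w := T.symm_exch w w v w
  have hP : T.R w w w v = T.R w v w w := T.symm_pair w w w v
  simp only [T.map_add₁, T.map_add₂, T.map_add₃, T.map_add₄,
    T.map_smul₁, T.map_smul₂, T.map_smul₃, T.map_smul₄,
    h2, h2', h2'', h2''', hE, hP, mul_zero, add_zero, zero_add]
  ring

/-- Evaluation of the quartic expression along `c = t • e` with `e` unitary. -/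
lemma re_eval (a b r : ℂ) (t : ℝ) (e : ℂ) (he : e * (starRingEnd ℂ) e = 1) :
    ((starRingEnd ℂ) ((t:ℂ)*e) ^ 2 * a + ((t:ℂ)*e) ^ 2 * (starRingEnd ℂ) a
      + 2 * (((t:ℂ)*e) * (starRingEnd ℂ) ((t:ℂ)*e) ^ 2) * b
      + 2 * (((t:ℂ)*e) ^ 2 * (starRingEnd ℂ) ((t:ℂ)*e)) * (starRingEnd ℂ) b
      + (((t:ℂ)*e) * (starRingEnd ℂ) ((t:ℂ)*e)) ^ 2 * r).re
    = t ^ 2 * (2 * ((starRingEnd ℂ) e ^ 2 * a).re)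
      + t ^ 3 * (4 * ((starRingEnd ℂ) e * b).re) + t ^ 4 * r.re := by
  have hcc : (starRingEnd ℂ) ((t : ℂ) * e) = (t : ℂ) * (starRingEnd ℂ) e := by
    simp [map_mul, Complex.conj_ofReal]
  have hadd1 : (starRingEnd ℂ) e ^ 2 * a + e ^ 2 * (starRingEnd ℂ) a
      = ((2 * ((starRingEnd ℂ) e ^ 2 * a).re : ℝ) : ℂ) := by
    have := Complex.add_conj ((starRingEnd ℂ) e ^ 2 * a)
    simpa [map_mul, map_pow] using this
  have hadd2 : (starRingEnd ℂ) e * b + e * (starRingEnd ℂ) b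
      = ((2 * ((starRingEnd ℂ) e * b).re : ℝ) : ℂ) := by
    have := Complex.add_conj ((starRingEnd ℂ) e * b)
    simpa [map_mul] using this
  have hX : ((starRingEnd ℂ) ((t:ℂ)*e) ^ 2 * a + ((t:ℂ)*e) ^ 2 * (starRingEnd ℂ) a
      + 2 * (((t:ℂ)*e) * (starRingEnd ℂ) ((t:ℂ)*e) ^ 2) * b
      + 2 * (((t:ℂ)*e) ^ 2 * (starRingEnd ℂ) ((t:ℂ)*e)) * (starRingEnd ℂ) b
      + (((t:ℂ)*e) * (starRingEnd ℂ) ((t:ℂ)*e)) ^ 2 * r)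
      = ((t ^ 2 * (2 * ((starRingEnd ℂ) e ^ 2 * a).re) : ℝ) : ℂ)
        + ((t ^ 3 * (2 * (2 * ((starRingEnd ℂ) e * b).re)) : ℝ) : ℂ)
        + ((t ^ 4 : ℝ) : ℂ) * r := by
    rw [hcc]
    push_cast [← hadd1, ← hadd2]
    ring_nf
    linear_combination (2 * (t:ℂ) ^ 3 * ((starRingEnd ℂ) e * b + e * (starRingEnd ℂ) b)
      + (t:ℂ) ^ 4 * (e * (starRingEnd ℂ) e + 1) * r) * he
  rw [hX]
  simp only [Complex.add_re, Complex.ofReal_re, Complex.re_ofReal_mul]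
  ring

lemma unit_of_mul_conj {e : ℂ} (h : e * (starRingEnd ℂ) e = 1) : ‖e‖ = 1 := by
  have h1 : Complex.normSq e = 1 := by
    have := congrArg Complex.re (Complex.mul_conj e ▸ h)
    simpa using this
  have := Complex.sq_norm e
  nlinarith [norm_nonneg e]

lemma truly_flat (T : KahlerCurvatureTensor V)
    (hsp : ∀ u : V, 0 ≤ (T.R u u u u).re)
    (v : V)
    (hbis : ∀ x : V, T.R v v x x = 0) :
    ∀ x y z : V, T.R v x y z = 0 := by
  have h2 : ∀ x y : V, T.R v v x y = 0 := two_v_zero T v hbis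
  have h2' : ∀ x y : V, T.R x y v v = 0 := fun x y => (T.symm_pair x y v v).trans (h2 x y)
  have h2'' : ∀ x y : V, T.R x v v y = 0 := fun x y => (T.symm_exch x v v y).trans (h2 x y)
  have h2''' : ∀ x y : V, T.R v x y v = 0 := by
    intro x y
    rw [← T.symm_conj x v v y, h2'' x y, map_zero]
  have hsymm : ∀ x y z : V, T.R v x y z = T.R v z y x :=
    fun x y z => (T.symm_pair v x y z).trans (T.symm_exch y z v x)
  -- Step: for each w, R v w w w = 0
  have hb : ∀ w : V, T.R v w w w = 0 := by
    intro w
    have hca : (starRingEnd ℂ) (T.R v w v w) = T.R w v w v := T.symm_conj v w v w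
    have hcb : (starRingEnd ℂ) (T.R v w w w) = T.R w v w w := T.symm_conj v w w w
    set a : ℂ := T.R v w v w with ha_def
    set b : ℂ := T.R v w w w with hb_def
    set r : ℂ := T.R w w w w with hr_def
    have heval : ∀ (t : ℝ) (e : ℂ), e * (starRingEnd ℂ) e = 1 →
        0 ≤ t ^ 2 * (2 * ((starRingEnd ℂ) e ^ 2 * a).re)
          + t ^ 3 * (4 * ((starRingEnd ℂ) e * b).re) + t ^ 4 * r.re := by
      intro t e he
      have h0 := hsp (v + ((t:ℂ) * e) • w)
      rw [expand4 T v w _ h2 h2' h2'' h2''', ← hca, ← hcb, re_eval a b r t e he] at h0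
      exact h0
    -- Step A : a = 0
    have hA : a = 0 := by
      by_contra hA0
      have habs : (0:ℝ) < ‖a‖ := by
        simpa [norm_pos_iff] using hA0
      have hne : ((‖a‖ : ℝ) : ℂ) ≠ 0 := by
        exact_mod_cast habs.ne'
      obtain ⟨s, hs⟩ := IsAlgClosed.exists_pow_nat_eq
        (x := -(starRingEnd ℂ) a / ((‖a‖ : ℝ) : ℂ)) (n := 2) (by norm_num)
      set e : ℂ := (starRingEnd ℂ) s with he_def
      have hce : (starRingEnd ℂ) e = s := by simp [he_def]
      have he2 : (starRingEnd ℂ) e ^ 2 * a = -((‖a‖ : ℝ) : ℂ) := by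
        rw [hce, hs, div_mul_eq_mul_div, neg_mul, mul_comm, Complex.mul_conj,
          Complex.normSq_eq_norm_sq]
        push_cast
        field_simp
      have hunit : e * (starRingEnd ℂ) e = 1 := by
        have h1 : ‖s‖ = 1 := by
          have hsq : ‖s‖ ^ 2 = 1 := by
            rw [← norm_pow, hs]
            simp [map_div₀, Complex.norm_conj, habs.ne']
          nlinarith [norm_nonneg s]
        have : Complex.normSq e = 1 := by
          rw [he_def]
          simp [← Complex.sq_norm, Complex.norm_conj, h1]
        rw [Complex.mul_conj, this]
        norm_num
      have hbound : ∀ t : ℝ, 0 < t → t ≤ 1 →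
          2 * ‖a‖ ≤ t * (4 * ‖b‖ + |r.re|) := by
        intro t ht ht1
        have h0 := heval t e hunit
        rw [he2] at h0
        have hre : ((-((‖a‖ : ℝ) : ℂ)).re) = -(‖a‖) := by simp
        rw [hre] at h0
        have hreb : ((starRingEnd ℂ) e * b).re ≤ ‖b‖ := by
          calc ((starRingEnd ℂ) e * b).re ≤ ‖(starRingEnd ℂ) e * b‖ :=
                Complex.re_le_norm _
            _ = ‖b‖ := by
                rw [norm_mul, Complex.norm_conj, unit_of_mul_conj hunit, one_mul]
        have hrr : r.re ≤ |r.re| := le_abs_self _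
        have h34 : t ^ 4 ≤ t ^ 3 := pow_le_pow_of_le_one ht.le ht1 (by norm_num)
        have key : t ^ 2 * (2 * ‖a‖) ≤ t ^ 2 * (t * (4 * ‖b‖ + |r.re|)) := by
          nlinarith [mul_nonneg (pow_nonneg ht.le 3) (sub_nonneg.mpr hreb),
            mul_le_mul_of_nonneg_left hrr (pow_nonneg ht.le 4),
            mul_le_mul_of_nonneg_right h34 (abs_nonneg r.re),
            pow_nonneg ht.le 3, pow_nonneg ht.le 4]
        exact le_of_mul_le_mul_left key (pow_pos ht 2)
      have := aux_eq_zero (by positivity) (by positivity) hbound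
      nlinarith [habs]
    -- Step B : b = 0
    by_contra hB0
    have habs : (0:ℝ) < ‖b‖ := by
      simpa [norm_pos_iff] using hB0
    have hne : ((‖b‖ : ℝ) : ℂ) ≠ 0 := by
      exact_mod_cast habs.ne'
    set e : ℂ := -b / ((‖b‖ : ℝ) : ℂ) with he_def
    have hbb : (starRingEnd ℂ) b * b = ((‖b‖ : ℝ) : ℂ) ^ 2 := by
      rw [mul_comm, Complex.mul_conj, Complex.normSq_eq_norm_sq]
      push_cast
      ring
    have hunit : e * (starRingEnd ℂ) e = 1 := by
      rw [he_def]
      rw [map_div₀, map_neg, Complex.conj_ofReal]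
      field_simp
      linear_combination hbb
    have heb : ((starRingEnd ℂ) e * b) = -((‖b‖ : ℝ) : ℂ) := by
      rw [he_def, map_div₀, map_neg, Complex.conj_ofReal, div_mul_eq_mul_div, neg_mul, hbb,
        pow_two, neg_div, mul_div_assoc, div_self hne, mul_one]
    have hbound : ∀ t : ℝ, 0 < t → t ≤ 1 →
        4 * ‖b‖ ≤ t * |r.re| := by
      intro t ht ht1
      have h0 := heval t e hunit
      rw [hA, heb] at h0
      simp only [mul_zero, Complex.zero_re, add_zero, zero_add] at h0
      have hre : ((-((‖b‖ : ℝ) : ℂ)).re) = -(‖b‖) := by simp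
      rw [hre] at h0
      have hrr : r.re ≤ |r.re| := le_abs_self _
      have h43 : t ^ 4 ≤ t ^ 3 := pow_le_pow_of_le_one ht.le ht1 (by norm_num)
      have key : t ^ 3 * (4 * ‖b‖) ≤ t ^ 3 * (t * |r.re|) := by
        nlinarith [mul_le_mul_of_nonneg_left hrr (pow_nonneg ht.le 4),
          mul_le_mul_of_nonneg_right h43 (abs_nonneg r.re)]
      exact le_of_mul_le_mul_left key (pow_pos ht 3)
    have := aux_eq_zero (by positivity) (abs_nonneg _) hbound
    nlinarith [habs]
  -- polarization of hb
  have exp3 : ∀ (x y : V) (c : ℂ),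
      (starRingEnd ℂ) c * T.R v y x x + c * T.R v x y x + (starRingEnd ℂ) c * T.R v x x y
        + (starRingEnd ℂ) c ^ 2 * T.R v y x y
        + (c * (starRingEnd ℂ) c) * T.R v y y x + (c * (starRingEnd ℂ) c) * T.R v x y y = 0 := by
    intro x y c
    have h := hb (x + c • y)
    simp only [T.map_add₂, T.map_add₃, T.map_add₄, T.map_smul₂, T.map_smul₃, T.map_smul₄,
      hb, mul_zero, add_zero, zero_add] at h
    linear_combination h
  have hD : ∀ x y : V, T.R v x y y = 0 := by
    intro x y
    have g1 := exp3 x y 1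
    have g2 := exp3 x y (-1)
    have g3 := exp3 x y Complex.I
    have g4 := exp3 x y (-Complex.I)
    simp only [map_one, map_neg, Complex.conj_I, one_mul, neg_mul, mul_neg, neg_neg,
      one_pow, neg_one_mul, mul_one] at g1 g2 g3 g4
    have hs := hsymm y y x
    linear_combination (g1 + g2 + g3 + g4) / 8 - hs / 2 +
      ((T.R v y y x + T.R v x y y) / 4 - T.R v y x y / 4) * Complex.I_sq
  intro x y z
  have r1 := hD x (y + z)
  have r2 := hD x (y + Complex.I • z)
  simp only [T.map_add₃, T.map_add₄, T.map_smul₃, T.map_smul₄, hD, Complex.conj_I,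
    mul_zero, add_zero, zero_add, neg_mul] at r1 r2
  linear_combination r1 / 2 + Complex.I * r2 / 2 +
    (T.R v x y z - T.R v x z y) / 2 * Complex.I_sq

end TrulyFlatAux

/-- If `v₁, …, v_k` are unit vectors, each minimizing the semi-positive
holomorphic sectional curvature on all of `V`, with `R(vᵢ,vᵢ,vᵢ,vᵢ) = 0` and
`R(vᵢ,vᵢ,x,x) = 0` for every `x ∈ V`, then every linear combination of the
`vᵢ` (in particular every vector of the complex line spanned by a single such
`v`) is truly flat; and the set of truly flat vectors is a complex linear
subspace of `V` containing all the `vᵢ`. -/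
theorem linear_combinations_truly_flat
    {V : Type*} [NormedAddCommGroup V] [InnerProductSpace ℂ V]
    [FiniteDimensional ℂ V]
    (T : KahlerCurvatureTensor V)
    (hsp : ∀ u : V, 0 ≤ (T.R u u u u).re)
    (k : ℕ) (v : Fin k → V)
    (hunit : ∀ i, ‖v i‖ = 1)
    (hmin : ∀ i, ∀ x : V, ‖x‖ = 1 →
      (T.R (v i) (v i) (v i) (v i)).re ≤ (T.R x x x x).re)
    (hzero : ∀ i, T.R (v i) (v i) (v i) (v i) = 0)
    (hbis : ∀ i, ∀ x : V, T.R (v i) (v i) x x = 0) :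
    (∀ c : Fin k → ℂ, ∀ x y z : V,
      T.R (∑ i : Fin k, c i • v i) x y z = 0) ∧
    (∃ W : Submodule ℂ V,
      (W : Set V) = {u : V | ∀ x y z : V, T.R u x y z = 0} ∧
      ∀ i, v i ∈ W) := by
  have flat : ∀ i, ∀ x y z : V, T.R (v i) x y z = 0 :=
    fun i => truly_flat T hsp (v i) (hbis i)
  have hzero' : ∀ x y z : V, T.R 0 x y z = 0 := by
    intro x y z
    have h := T.map_smul₁ 0 0 x y z
    simpa using h
  let W : Submodule ℂ V :=
    { carrier := {u : V | ∀ x y z : V, T.R u x y z = 0}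
      add_mem' := by
        intro p q hp hq x y z
        rw [T.map_add₁, hp x y z, hq x y z, add_zero]
      zero_mem' := hzero'
      smul_mem' := by
        intro c u hu x y z
        rw [T.map_smul₁, hu x y z, mul_zero] }
  have hvW : ∀ i, v i ∈ W := fun i => flat i
  constructor
  · intro c x y z
    have hmem : (∑ i : Fin k, c i • v i) ∈ W :=
      Submodule.sum_mem W (fun i _ => Submodule.smul_mem W _ (hvW i))
    exact hmem x y z
  · exact ⟨W, rfl, hvW⟩
end
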